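/- arXiv:math/9809118 — 8 statements merged into one kernel-verified Lean document; each statement's English description precedes it below -/
import Mathlib

section
/- Let T be a ℚ-weighted tile all of whose rectangles can be chosen with corners having rational coordinates. Then T ℚ-shapetiles a square if and only if the weighted area of T is not zero. -/
open Finset

/-- Indicator (with value 1) of the rectangle `[b1,b2) × [c1,c2)`. -/
noncomputable def rectInd (b1 b2 c1 c2 : ℝ) (p : ℝ × ℝ) : ℚ :=
  if b1 ≤ p.1 ∧ p.1 < b2 ∧ c1 ≤ p.2 ∧ p.2 < c2 then 1 else 0

/-- `T` ℚ-shapetiles a square: some square `[0,s) × [0,s)` is a finite ℚ-linear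
combination of translates of rescalings `T(ρ)` of `T`. -/
noncomputable def QShapeTilesSquare (T : ℝ × ℝ → ℚ) : Prop :=
  ∃ (s : ℝ), 0 < s ∧
    ∃ (n : ℕ) (a : Fin n → ℚ) (ρ : Fin n → ℝ) (v : Fin n → ℝ × ℝ),
      (∀ i, 0 < ρ i) ∧
      ∀ p : ℝ × ℝ, rectInd 0 s 0 s p =
        ∑ i, a i * T ((p.1 - (v i).1) / ρ i, (p.2 - (v i).2) / ρ i)

/-!
Integrating a ℚ-combination `∑ aᵢ T((p - vᵢ)/ρᵢ)` gives `(∑ aᵢ ρᵢ²) · area T`, so a tile of weighted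
area zero cannot combine to a square.

Conversely, after clearing denominators `T(·/D)` is a ℚ-combination of unit grid cells, i.e. a
Laurent polynomial `P ∈ ℚ[x^±1, y^±1]` with `P(1, 1) = D² · area T ≠ 0`. The polynomials
`P(x^k, y^k)`, `k ≥ 1`, generate the unit ideal: otherwise they all vanish at a point of the
residue field of a maximal ideal, and Dedekind's independence of the characters `k ↦ γ^k` forces
`P(1, 1) = 0`. Multiplying `1 = ∑ cᵢ P(x^{kᵢ}, y^{kᵢ})` by the `N × N` block of cells, `N = ∏ kᵢ`,
writes the `N`-square as a combination of translates of the blow-ups of `P` by the factors `kᵢ`,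
which are rescalings of `T`.
-/

open AddMonoidAlgebra MeasureTheory

def rescaledTranslates (T : ℝ × ℝ → ℚ) : Set (ℝ × ℝ → ℚ) :=
  {f | ∃ ρ > 0, ∃ v : ℝ × ℝ, f = fun p => T ((p.1 - v.1) / ρ, (p.2 - v.2) / ρ)}

theorem qShapeTilesSquare_iff (T : ℝ × ℝ → ℚ) :
    QShapeTilesSquare T ↔
      ∃ s > 0, rectInd 0 s 0 s ∈ Submodule.span ℚ (rescaledTranslates T) := by
  simp only [QShapeTilesSquare, Submodule.mem_span_set', funext_iff, Finset.sum_apply,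
    Pi.smul_apply, smul_eq_mul]
  refine exists_congr fun s => and_congr_right fun _ => ⟨?_, ?_⟩
  · rintro ⟨n, a, ρ, v, hρ, h⟩
    exact ⟨n, a, fun i => ⟨_, ρ i, hρ i, v i, rfl⟩, fun p => (h p).symm⟩
  · rintro ⟨n, a, g, h⟩
    choose ρ hρ v hv using fun i => (g i).2
    refine ⟨n, a, ρ, v, hρ, fun p => (h p).symm.trans ?_⟩
    simp only [hv]

theorem rectInd_eq_indicator (b1 b2 c1 c2 : ℝ) :
    (fun p => (rectInd b1 b2 c1 c2 p : ℝ)) = (Set.Ico b1 b2 ×ˢ Set.Ico c1 c2).indicator 1 := by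
  ext p
  simp only [rectInd, Set.indicator, Set.mem_prod, Set.mem_Ico, Pi.one_apply, and_assoc]
  split_ifs <;> simp

theorem integrable_rectInd (b1 b2 c1 c2 : ℝ) :
    Integrable (fun p => (rectInd b1 b2 c1 c2 p : ℝ)) := by
  rw [rectInd_eq_indicator, integrable_indicator_iff (measurableSet_Ico.prod measurableSet_Ico)]
  exact integrableOn_const (by simp [Measure.volume_eq_prod, Measure.prod_prod, ENNReal.mul_eq_top])

theorem integral_rectInd {b1 b2 c1 c2 : ℝ} (hb : b1 ≤ b2) (hc : c1 ≤ c2) :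
    ∫ p, (rectInd b1 b2 c1 c2 p : ℝ) = (b2 - b1) * (c2 - c1) := by
  rw [rectInd_eq_indicator, integral_indicator_one (measurableSet_Ico.prod measurableSet_Ico),
    Measure.volume_eq_prod, measureReal_prod_prod]
  simp [hb, hc]

theorem integrable_sum_rectInd {ι : Type*} [Fintype ι] (a : ι → ℚ) (b1 b2 c1 c2 : ι → ℝ) :
    Integrable fun p => ((∑ i, a i * rectInd (b1 i) (b2 i) (c1 i) (c2 i) p : ℚ) : ℝ) := by
  push_cast
  exact integrable_finsetSum _ fun i _ => (integrable_rectInd _ _ _ _).const_mul _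

theorem integral_sum_rectInd {ι : Type*} [Fintype ι] (a : ι → ℚ) {b1 b2 c1 c2 : ι → ℝ}
    (hb : ∀ i, b1 i ≤ b2 i) (hc : ∀ i, c1 i ≤ c2 i) :
    ∫ p, ((∑ i, a i * rectInd (b1 i) (b2 i) (c1 i) (c2 i) p : ℚ) : ℝ) =
      ∑ i, a i * (b2 i - b1 i) * (c2 i - c1 i) := by
  push_cast
  rw [integral_finsetSum _ fun i _ => (integrable_rectInd _ _ _ _).const_mul _]
  simp only [integral_const_mul, integral_rectInd (hb _) (hc _), mul_assoc]

theorem integrable_comp_rescale {f : ℝ × ℝ → ℝ} (hf : Integrable f) {ρ : ℝ} (hρ : 0 < ρ)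
    (v : ℝ × ℝ) : Integrable fun p : ℝ × ℝ => f ((p.1 - v.1) / ρ, (p.2 - v.2) / ρ) := by
  have := (hf.comp_smul (inv_ne_zero hρ.ne')).comp_sub_right v
  convert this using 3 with p
  ext <;> simp [div_eq_inv_mul]

theorem integral_comp_rescale (f : ℝ × ℝ → ℝ) {ρ : ℝ} (hρ : 0 < ρ) (v : ℝ × ℝ) :
    ∫ p : ℝ × ℝ, f ((p.1 - v.1) / ρ, (p.2 - v.2) / ρ) = ρ ^ 2 * ∫ p, f p := by
  have := integral_sub_right_eq_self (μ := (volume : Measure (ℝ × ℝ))) (fun p => f (ρ⁻¹ • p)) v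
  simp only [Measure.integral_comp_smul, Module.finrank_prod, Module.finrank_self] at this
  convert this using 2
  · ext p
    congr 1
    ext <;> simp [div_eq_inv_mul]
  · rw [smul_eq_mul, inv_pow, inv_inv, abs_of_pos (by positivity)]

theorem integral_eq_zero_of_mem_span_rescaledTranslates {T : ℝ × ℝ → ℚ}
    (hT : Integrable fun p => (T p : ℝ)) (h0 : ∫ p, (T p : ℝ) = 0) {f : ℝ × ℝ → ℚ}
    (hf : f ∈ Submodule.span ℚ (rescaledTranslates T)) :
    Integrable (fun p => (f p : ℝ)) ∧ ∫ p, (f p : ℝ) = 0 := by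
  induction hf using Submodule.span_induction with
  | mem f hf =>
    obtain ⟨ρ, hρ, v, rfl⟩ := hf
    exact ⟨integrable_comp_rescale hT hρ v,
      (integral_comp_rescale _ hρ v).trans (by rw [h0, mul_zero])⟩
  | zero => simp
  | add f g _ _ hf hg =>
    simp only [Pi.add_apply, Rat.cast_add]
    exact ⟨hf.1.add hg.1, by rw [integral_add hf.1 hg.1, hf.2, hg.2, add_zero]⟩
  | smul c f _ hf =>
    simp only [Pi.smul_apply, smul_eq_mul, Rat.cast_mul]
    exact ⟨hf.1.const_mul _, by rw [integral_const_mul, hf.2, mul_zero]⟩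

theorem QShapeTilesSquare.integral_ne_zero {T : ℝ × ℝ → ℚ} (hT : Integrable fun p => (T p : ℝ))
    (h : QShapeTilesSquare T) : ∫ p, (T p : ℝ) ≠ 0 := by
  obtain ⟨s, hs, hmem⟩ := (qShapeTilesSquare_iff T).mp h
  intro h0
  have hsq := (integral_eq_zero_of_mem_span_rescaledTranslates hT h0 hmem).2
  rw [integral_rectInd hs.le hs.le, sub_zero] at hsq
  exact (mul_self_pos.mpr hs.ne').ne' hsq

theorem Finset.sum_eq_zero_of_forall_sum_mul_pow_succ_eq_zero {ι K : Type*} [Field K]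
    (s : Finset ι) (c f : ι → K) (hf : ∀ i ∈ s, f i ≠ 0)
    (h : ∀ j : ℕ, ∑ i ∈ s, c i * f i ^ (j + 1) = 0) : ∑ i ∈ s, c i = 0 := by
  classical
  set d : K → K := fun γ => ∑ i ∈ s with f i = γ, c i
  have hfiber : ∀ g : ι → K, ∑ γ ∈ s.image f, ∑ i ∈ s with f i = γ, g i = ∑ i ∈ s, g i :=
    Finset.sum_fiberwise_of_maps_to fun i hi => Finset.mem_image_of_mem f hi
  have hpow : ∀ j : ℕ, ∑ γ ∈ s.image f, d γ * γ ^ (j + 1) = 0 := fun j => by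
    rw [← h j, ← hfiber]
    refine Finset.sum_congr rfl fun γ _ => ?_
    rw [Finset.sum_mul]
    exact Finset.sum_congr rfl fun i hi => by rw [(Finset.mem_filter.mp hi).2]
  -- Dedekind's independence of the characters `n ↦ γ ^ n` of `ℕ`
  have hindep := (linearIndependent_monoidHom (Multiplicative ℕ) K).comp (powersHom K)
    (powersHom K).injective
  have hd : ∀ γ ∈ s.image f, d γ * γ = 0 := by
    refine linearIndependent_iff'.mp hindep _ _ (funext fun n => ?_)
    simpa [mul_assoc, ← pow_succ'] using hpow n.toAdd
  rw [← hfiber]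
  refine Finset.sum_eq_zero fun γ hγ => ?_
  obtain ⟨i, hi, rfl⟩ := Finset.mem_image.mp hγ
  exact (mul_eq_zero.mp (hd _ hγ)).resolve_right (hf i hi)

namespace AddMonoidAlgebra

variable {k M : Type*} [Field k] [AddCommGroup M]

-- `P(x, y) ↦ P(x^m, y^m)` when `M = ℤ × ℤ`
noncomputable def dilate (m : ℕ) : k[M] →ₐ[k] k[M] := mapDomainAlgHom k k (nsmulAddMonoidHom m)

theorem dilate_single (m : ℕ) (u : M) (c : k) : dilate m (single u c) = single (m • u) c := by
  simp [dilate, mapDomain_single]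

noncomputable def augmentation : k[M] →ₐ[k] k := lift k k M 1

theorem augmentation_single (u : M) (c : k) : augmentation (single u c) = c := by
  simp [augmentation]

theorem augmentation_eq_zero_of_map_dilate_eq_zero {K : Type*} [Field K] [Algebra k K]
    (φ : k[M] →ₐ[k] K) (P : k[M]) (h : ∀ j : ℕ, φ (dilate (j + 1) P) = 0) :
    augmentation P = 0 := by
  classical
  set χ : Multiplicative M →* K := (lift k K M).symm φ
  have hdilate : ∀ j, φ.comp (dilate j) = lift k K M (χ ^ j) := fun j =>
    algHom_ext (fun u => by simp [χ, dilate_single, ← map_pow, single_pow]) (by ext)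
  have hχ : ∀ u, χ u ≠ 0 := fun u => ((Group.isUnit u).map χ).ne_zero
  apply (algebraMap k K).injective
  have := Finset.sum_eq_zero_of_forall_sum_mul_pow_succ_eq_zero P.coeff.support
    (fun u => algebraMap k K (P.coeff u)) (fun u => χ (.ofAdd u)) (fun u _ => hχ _) fun j => by
      rw [← h j, ← AlgHom.comp_apply, hdilate, lift_apply]
      simp [Finsupp.sum, Algebra.smul_def]
  simpa [augmentation, lift_apply, Finsupp.sum, map_sum] using this

theorem one_mem_span_dilate (P : k[M]) (hP : augmentation P ≠ 0) :
    (1 : k[M]) ∈ Ideal.span (Set.range fun j : ℕ => dilate (j + 1) P) := by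
  by_contra h1
  obtain ⟨m, hm, hle⟩ := Ideal.exists_le_maximal _ ((Ideal.ne_top_iff_one _).mpr h1)
  let := Ideal.Quotient.field m
  refine hP (augmentation_eq_zero_of_map_dilate_eq_zero (Ideal.Quotient.mkₐ k m) P fun j => ?_)
  exact Ideal.Quotient.eq_zero_iff_mem.mpr (hle (Ideal.subset_span ⟨j, rfl⟩))

end AddMonoidAlgebra

noncomputable def gridFun : ℚ[ℤ × ℤ] →ₗ[ℚ] (ℝ × ℝ → ℚ) where
  toFun F p := F.coeff (⌊p.1⌋, ⌊p.2⌋)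
  map_add' _ _ := rfl
  map_smul' _ _ := rfl

theorem gridFun_apply (F : ℚ[ℤ × ℤ]) (p : ℝ × ℝ) : gridFun F p = F.coeff (⌊p.1⌋, ⌊p.2⌋) := rfl

theorem gridFun_injective : Function.Injective gridFun := fun F G h =>
  AddMonoidAlgebra.ext <| Finsupp.ext fun u => by
    simpa [gridFun_apply] using congr_fun h ((u.1 : ℝ), (u.2 : ℝ))

theorem gridFun_single_mul (w : ℤ × ℤ) (c : ℚ) (F : ℚ[ℤ × ℤ]) (p : ℝ × ℝ) :
    gridFun (single w c * F) p = c * gridFun F (p.1 - w.1, p.2 - w.2) := by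
  obtain ⟨w1, w2⟩ := w
  simp [gridFun_apply, coeff_single_mul_apply, neg_add_eq_sub, Int.floor_sub_intCast]

theorem gridFun_mul (F G : ℚ[ℤ × ℤ]) :
    gridFun (F * G) =
      ∑ w ∈ F.coeff.support, F.coeff w • fun p => gridFun G (p.1 - w.1, p.2 - w.2) := by
  conv_lhs => rw [← F.sum_coeff_single]
  ext p
  simp [Finsupp.sum, Finset.sum_mul, gridFun_single_mul]

noncomputable def gridRect (β1 β2 γ1 γ2 : ℤ) : ℚ[ℤ × ℤ] :=
  ∑ w ∈ Finset.Ico β1 β2 ×ˢ Finset.Ico γ1 γ2, single w 1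

theorem gridFun_gridRect (β1 β2 γ1 γ2 : ℤ) :
    gridFun (gridRect β1 β2 γ1 γ2) = rectInd β1 β2 γ1 γ2 := by
  ext p
  simp [gridRect, gridFun_apply, coeff_sum, Finsupp.single_apply, rectInd, Int.le_floor,
    Int.floor_lt, and_assoc]

theorem augmentation_gridRect {β1 β2 γ1 γ2 : ℤ} (hβ : β1 ≤ β2) (hγ : γ1 ≤ γ2) :
    augmentation (gridRect β1 β2 γ1 γ2) = (β2 - β1) * (γ2 - γ1) := by
  have hcard : ∀ {a b : ℤ}, a ≤ b → ((b - a).toNat : ℚ) = b - a := fun h => by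
    rw [← Int.cast_natCast, Int.toNat_of_nonneg (by omega), Int.cast_sub]
  simp [gridRect, augmentation_single, hcard hβ, hcard hγ]

theorem rectInd_mul_mul {ρ : ℝ} (hρ : 0 < ρ) (b1 b2 c1 c2 : ℝ) (p : ℝ × ℝ) :
    rectInd (ρ * b1) (ρ * b2) (ρ * c1) (ρ * c2) (ρ * p.1, ρ * p.2) = rectInd b1 b2 c1 c2 p := by
  simp only [rectInd, mul_le_mul_iff_right₀ hρ, mul_lt_mul_iff_right₀ hρ]

theorem floor_div_eq_iff {k : ℝ} (hk : 0 < k) (x : ℝ) (z : ℤ) :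
    ⌊x / k⌋ = z ↔ 0 ≤ x - k * z ∧ x - k * z < k := by
  rw [Int.floor_eq_iff, le_div_iff₀ hk, div_lt_iff₀ hk]
  constructor <;> rintro ⟨h1, h2⟩ <;> constructor <;> linarith

theorem gridFun_gridRect_mul_dilate {k : ℕ} (hk : 0 < k) (F : ℚ[ℤ × ℤ]) (p : ℝ × ℝ) :
    gridFun (gridRect 0 k 0 k * dilate k F) p = gridFun F (p.1 / k, p.2 / k) := by
  induction F using AddMonoidAlgebra.induction_linear with
  | zero => simp [gridFun_apply]
  | add F G hF hG => simp only [map_add, mul_add, Pi.add_apply, hF, hG]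
  | single u c =>
    have hk' : (0 : ℝ) < k := Nat.cast_pos.mpr hk
    have hcell : u = (⌊p.1 / k⌋, ⌊p.2 / k⌋) ↔
        0 ≤ p.1 - k * u.1 ∧ p.1 - k * u.1 < k ∧ 0 ≤ p.2 - k * u.2 ∧ p.2 - k * u.2 < k := by
      rw [Prod.ext_iff, eq_comm, floor_div_eq_iff hk', eq_comm, floor_div_eq_iff hk', and_assoc]
    rw [dilate_single, mul_comm, gridFun_single_mul, gridFun_gridRect, gridFun_apply, coeff_single,
      Finsupp.single_apply, if_congr hcell rfl rfl, rectInd]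
    simp

theorem gridRect_mul_dilate {k : ℕ} (hk : 0 < k) (m : ℕ) :
    gridRect 0 (k * m : ℕ) 0 (k * m : ℕ) = gridRect 0 k 0 k * dilate k (gridRect 0 m 0 m) := by
  refine gridFun_injective (funext fun p => ?_)
  have hk' : (0 : ℝ) < k := Nat.cast_pos.mpr hk
  rw [gridFun_gridRect_mul_dilate hk, gridFun_gridRect, gridFun_gridRect,
    ← rectInd_mul_mul hk' _ _ _ _ (p.1 / k, p.2 / k)]
  simp [mul_div_cancel₀ _ hk'.ne']

theorem gridFun_mul_gridRect_mul_dilate_mem_span {k : ℕ} (hk : 0 < k) (E P : ℚ[ℤ × ℤ]) :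
    gridFun (E * (gridRect 0 k 0 k * dilate k P)) ∈
      Submodule.span ℚ (rescaledTranslates (gridFun P)) := by
  rw [gridFun_mul]
  refine Submodule.sum_mem _ fun w _ => Submodule.smul_mem _ _ (Submodule.subset_span ?_)
  exact ⟨k, Nat.cast_pos.mpr hk, (w.1, w.2), funext fun p => gridFun_gridRect_mul_dilate hk P _⟩

theorem exists_rectInd_mem_span_gridFun (P : ℚ[ℤ × ℤ]) (hP : augmentation P ≠ 0) :
    ∃ N : ℕ, 0 < N ∧ rectInd 0 N 0 N ∈ Submodule.span ℚ (rescaledTranslates (gridFun P)) := by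
  obtain ⟨n, c, g, hsum⟩ := Submodule.mem_span_set'.mp (one_mem_span_dilate P hP)
  choose j hj using fun i => (g i).2
  choose m hm using fun i => Finset.dvd_prod_of_mem (fun i => j i + 1) (Finset.mem_univ i)
  set N := ∏ i, (j i + 1)
  have hsq : gridRect 0 N 0 N = ∑ i, (c i * dilate (j i + 1) (gridRect 0 (m i) 0 (m i))) *
      (gridRect 0 (j i + 1 : ℕ) 0 (j i + 1 : ℕ) * dilate (j i + 1) P) :=
    calc gridRect 0 N 0 N = gridRect 0 N 0 N * ∑ i, c i • (g i : ℚ[ℤ × ℤ]) := by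
          rw [hsum, mul_one]
      _ = _ := by
        refine Finset.mul_sum .. |>.trans (Finset.sum_congr rfl fun i _ => ?_)
        rw [← hj i, smul_eq_mul, hm i, gridRect_mul_dilate (by omega)]
        ring
  refine ⟨N, Finset.prod_pos fun i _ => by omega, ?_⟩
  have hN := gridFun_gridRect 0 N 0 N
  push_cast at hN
  rw [← hN, hsq, map_sum]
  exact Submodule.sum_mem _ fun i _ => gridFun_mul_gridRect_mul_dilate_mem_span (by omega) _ _

theorem rescaledTranslates_subset_of_eq_comp_mul {T T' : ℝ × ℝ → ℚ} {D : ℝ} (hD : 0 < D)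
    (hT : ∀ q, T q = T' (D * q.1, D * q.2)) : rescaledTranslates T' ⊆ rescaledTranslates T := by
  rintro f ⟨ρ, hρ, v, rfl⟩
  refine ⟨ρ * D, mul_pos hρ hD, v, funext fun p => ?_⟩
  rw [hT]
  congr 2 <;> field_simp

theorem qShapeTilesSquare_of_eq_gridFun {T : ℝ × ℝ → ℚ} {D : ℝ} (hD : 0 < D) {P : ℚ[ℤ × ℤ]}
    (hT : ∀ q, T q = gridFun P (D * q.1, D * q.2)) (hP : augmentation P ≠ 0) :
    QShapeTilesSquare T := by
  obtain ⟨N, hN, hmem⟩ := exists_rectInd_mem_span_gridFun P hP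
  exact (qShapeTilesSquare_iff T).mpr ⟨N, Nat.cast_pos.mpr hN,
    Submodule.span_mono (rescaledTranslates_subset_of_eq_comp_mul hD hT) hmem⟩

theorem Rat.exists_nat_mul_eq_intCast (s : Finset ℚ) :
    ∃ D : ℕ, 0 < D ∧ ∀ x ∈ s, ∃ z : ℤ, (D : ℚ) * x = z := by
  refine ⟨∏ x ∈ s, x.den, Finset.prod_pos fun x _ => x.den_pos, fun x hx => ?_⟩
  obtain ⟨m, hm⟩ := Finset.dvd_prod_of_mem Rat.den hx
  refine ⟨x.num * m, ?_⟩
  rw [hm, Nat.cast_mul, mul_right_comm, Rat.den_mul_eq_num]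
  push_cast
  ring

theorem exists_gridFun_eq_sum_rectInd {ι : Type*} [Fintype ι] (a : ι → ℚ)
    (b1 b2 c1 c2 : ι → ℚ) (hb : ∀ i, b1 i ≤ b2 i) (hc : ∀ i, c1 i ≤ c2 i) :
    ∃ D : ℕ, 0 < D ∧ ∃ P : ℚ[ℤ × ℤ],
      (∀ q, ∑ i, a i * rectInd (b1 i) (b2 i) (c1 i) (c2 i) q = gridFun P (D * q.1, D * q.2)) ∧
      augmentation P = D ^ 2 * ∑ i, a i * (b2 i - b1 i) * (c2 i - c1 i) := by
  classical
  obtain ⟨D, hD, hint⟩ := Rat.exists_nat_mul_eq_intCast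
    (Finset.univ.image b1 ∪ Finset.univ.image b2 ∪ Finset.univ.image c1 ∪ Finset.univ.image c2)
  choose β1 hβ1 using fun i => hint (b1 i) (by simp)
  choose β2 hβ2 using fun i => hint (b2 i) (by simp)
  choose γ1 hγ1 using fun i => hint (c1 i) (by simp)
  choose γ2 hγ2 using fun i => hint (c2 i) (by simp)
  have hD' : (0 : ℚ) < D := Nat.cast_pos.mpr hD
  refine ⟨D, hD, ∑ i, a i • gridRect (β1 i) (β2 i) (γ1 i) (γ2 i), fun q => ?_, ?_⟩
  · simp only [map_sum, map_smul, Finset.sum_apply, Pi.smul_apply, smul_eq_mul, gridFun_gridRect]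
    refine Finset.sum_congr rfl fun i _ => ?_
    have hcast : ∀ (x : ℚ) (z : ℤ), (D : ℚ) * x = z → ((z : ℝ)) = D * (x : ℝ) := fun x z h => by
      exact_mod_cast h.symm
    rw [hcast _ _ (hβ1 i), hcast _ _ (hβ2 i), hcast _ _ (hγ1 i), hcast _ _ (hγ2 i),
      rectInd_mul_mul (Nat.cast_pos.mpr hD)]
  · have hle : ∀ {x y : ℚ} {z w : ℤ}, x ≤ y → (D : ℚ) * x = z → (D : ℚ) * y = w → z ≤ w :=
      fun hxy hz hw => by
        have : (D : ℚ) * _ ≤ D * _ := mul_le_mul_of_nonneg_left hxy hD'.le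
        exact_mod_cast hz ▸ hw ▸ this
    simp only [map_sum, map_smul, smul_eq_mul, Finset.mul_sum,
      augmentation_gridRect (hle (hb _) (hβ1 _) (hβ2 _)) (hle (hc _) (hγ1 _) (hγ2 _))]
    refine Finset.sum_congr rfl fun i _ => ?_
    rw [← hβ1, ← hβ2, ← hγ1, ← hγ2]
    ring

/-- A ℚ-weighted tile made of rectangles with rational corners ℚ-shapetiles a
square if and only if its weighted area is nonzero. -/
theorem q_shapetiles_square_iff_area_ne_zero
    (T : ℝ × ℝ → ℚ) (n : ℕ) (a : Fin n → ℚ) (b1 b2 c1 c2 : Fin n → ℚ)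
    (hb : ∀ i, b1 i < b2 i) (hc : ∀ i, c1 i < c2 i)
    (hT : ∀ p, T p = ∑ i, a i * rectInd (b1 i) (b2 i) (c1 i) (c2 i) p) :
    QShapeTilesSquare T ↔ (∑ i, a i * (b2 i - b1 i) * (c2 i - c1 i)) ≠ 0 := by
  obtain rfl : T = _ := funext hT
  constructor
  · intro h harea
    refine h.integral_ne_zero (integrable_sum_rectInd _ _ _ _ _) ?_
    rw [integral_sum_rectInd a (fun i => Rat.cast_le.mpr (hb i).le)
      (fun i => Rat.cast_le.mpr (hc i).le)]
    exact_mod_cast harea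
  · intro harea
    obtain ⟨D, hD, P, hP, hParea⟩ :=
      exists_gridFun_eq_sum_rectInd a b1 b2 c1 c2 (fun i => (hb i).le) (fun i => (hc i).le)
    refine qShapeTilesSquare_of_eq_gridFun (Nat.cast_pos.mpr hD) hP ?_
    rw [hParea]
    exact mul_ne_zero (by positivity) harea
end

section
/- Let A be a commutative ring with unity. For α ∈ ℝ∖{0} let χ_α : ℝ → A be 𝟙_{[0,α)} if α > 0 and −𝟙_{[α,0)} if α < 0, and for α,β ∈ ℝ∖{0} let R_{αβ} : ℝ² → A be the function (x,y) ↦ χ_α(x)·χ_β(y). Then every A-weighted tile T can be expressed uniquely as a finite A-linear combination of the functions R_{αβ}; that is, there is exactly one finitely supported function c : (ℝ∖{0})×(ℝ∖{0}) → A with T = ∑_{(α,β)} c(α,β)·R_{αβ}. In particular the family {R_{αβ} : α,β ∈ ℝ∖{0}} is A-linearly independent in the A-module of functions ℝ² → A. -/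
open Finset

/-- `χ_α` : the indicator of `[0,α)` if `α > 0`, and minus the indicator of
`[α,0)` if `α < 0`. -/
noncomputable def chi (A : Type*) [CommRing A] (α : ℝ) (x : ℝ) : A :=
  if 0 < α then (if 0 ≤ x ∧ x < α then 1 else 0)
  else (if α ≤ x ∧ x < 0 then -1 else 0)

/-- The oriented rectangle function `R_{αβ}(x,y) = χ_α(x)·χ_β(y)`. -/
noncomputable def Rab (A : Type*) [CommRing A] (α β : ℝ) : ℝ × ℝ → A :=
  fun p => chi A α p.1 * chi A β p.2

/-- `T` is an `A`-weighted tile: a finite `A`-linear combination of indicator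
functions of rectangles `[b1,b2) × [c1,c2)`. -/
noncomputable def IsWeightedTile (A : Type*) [CommRing A] (T : ℝ × ℝ → A) : Prop :=
  ∃ (n : ℕ) (a : Fin n → A) (b1 b2 c1 c2 : Fin n → ℝ),
    (∀ i, b1 i < b2 i) ∧ (∀ i, c1 i < c2 i) ∧
    ∀ p, T p = ∑ i, a i *
      (if b1 i ≤ p.1 ∧ p.1 < b2 i ∧ c1 i ≤ p.2 ∧ p.2 < c2 i then 1 else 0)

/-! ### Auxiliary lemmas -/

abbrev NZ : Type := {x : ℝ // x ≠ 0}

lemma chi_eq (A : Type*) [CommRing A] (α x : ℝ) :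
    chi A α x = (if 0 ≤ x then 1 else 0) * (if x < α then 1 else 0)
      - (if α ≤ x then 1 else 0) * (if x < 0 then (1:A) else 0) := by
  unfold chi
  rw [ite_and, ite_and]
  split_ifs <;> first | ring1 | (exfalso; (try push_neg at *); linarith)

lemma ind_chi (A : Type*) [CommRing A] {b c : ℝ} (h : b ≤ c) (x : ℝ) :
    (if b ≤ x ∧ x < c then (1:A) else 0) = chi A c x - chi A b x := by
  rw [chi_eq, chi_eq, ite_and]
  split_ifs <;> first | ring1 | (exfalso; (try push_neg at *); linarith)

lemma chi_zero (A : Type*) [CommRing A] (x : ℝ) : chi A 0 x = 0 := by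
  unfold chi
  rw [if_neg (lt_irrefl 0), if_neg]
  rintro ⟨h1, h2⟩; linarith

lemma chi_congr_pos (A : Type*) [CommRing A] {α x y : ℝ} (hx : 0 ≤ x) (hy : 0 ≤ y)
    (h : x < α ↔ y < α) : chi A α x = chi A α y := by
  rw [chi_eq, chi_eq, if_pos hx, if_pos hy, if_neg (not_lt.mpr hx), if_neg (not_lt.mpr hy),
    if_congr h rfl rfl]
  ring

lemma chi_congr_neg (A : Type*) [CommRing A] {α x y : ℝ} (hx : x < 0) (hy : y < 0)
    (h : α ≤ x ↔ α ≤ y) : chi A α x = chi A α y := by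
  rw [chi_eq, chi_eq, if_neg (not_le.mpr hx), if_neg (not_le.mpr hy), if_pos hx, if_pos hy,
    if_congr h rfl rfl]
  ring

lemma chi_pos_one (A : Type*) [CommRing A] {α x : ℝ} (h1 : 0 ≤ x) (h2 : x < α) :
    chi A α x = 1 := by
  unfold chi
  rw [if_pos (lt_of_le_of_lt h1 h2), if_pos ⟨h1, h2⟩]

lemma chi_pos_self (A : Type*) [CommRing A] {α : ℝ} (h : 0 < α) : chi A α α = 0 := by
  unfold chi
  rw [if_pos h, if_neg]
  rintro ⟨_, h2⟩; exact lt_irrefl _ h2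

lemma chi_neg_self (A : Type*) [CommRing A] {α : ℝ} (h : α < 0) : chi A α α = -1 := by
  unfold chi
  rw [if_neg (by linarith), if_pos ⟨le_refl _, h⟩]

lemma chi_lt (A : Type*) [CommRing A] {α x : ℝ} (hα : ¬ 0 < α) (h : x < α) : chi A α x = 0 := by
  unfold chi
  rw [if_neg hα, if_neg]
  rintro ⟨h1, _⟩; linarith

/-- Separation: for every `α0 ≠ 0` and finite set `s` of reals, there are two points at which
every `chi α` (`α ∈ s`, `α ≠ α0`) agrees, but `chi α0` differs by a unit. -/
lemma chi_sep (A : Type*) [CommRing A] (s : Finset ℝ) {α0 : ℝ} (h0 : α0 ≠ 0) :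
    ∃ x y : ℝ, (∀ α ∈ s, α ≠ α0 → chi A α x = chi A α y) ∧
      (chi A α0 x - chi A α0 y) * (chi A α0 x - chi A α0 y) = 1 := by
  rcases h0.lt_or_gt with hneg | hpos
  · -- α0 < 0
    set t : Finset ℝ := insert (α0 - 1) (s.filter (· < α0)) with ht
    have htne : t.Nonempty := Finset.insert_nonempty _ _
    set m := t.max' htne with hm
    have hmlt : m < α0 := by
      refine (Finset.max'_lt_iff t htne).mpr fun b hb => ?_
      rw [ht] at hb
      rcases Finset.mem_insert.mp hb with h | h
      · rw [h]; linarith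
      · exact (Finset.mem_filter.mp h).2
    set y := (m + α0) / 2 with hy
    have hy1 : m < y := by rw [hy]; linarith
    have hy2 : y < α0 := by rw [hy]; linarith
    have hy0 : y < 0 := lt_trans hy2 hneg
    refine ⟨α0, y, ?_, ?_⟩
    · intro α hα hne
      rcases lt_trichotomy α α0 with h | h | h
      · have hαm : α ≤ m := t.le_max' α (Finset.mem_insert_of_mem
          (Finset.mem_filter.mpr ⟨hα, h⟩))
        exact chi_congr_neg A hneg hy0 (by constructor <;> intro <;> linarith)
      · exact absurd h hne
      · exact chi_congr_neg A hneg hy0 (by constructor <;> intro <;> linarith)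
    · rw [chi_neg_self A hneg, chi_lt A (by linarith) hy2]
      ring
  · -- 0 < α0
    set t : Finset ℝ := insert 0 (s.filter (· < α0)) with ht
    have htne : t.Nonempty := Finset.insert_nonempty _ _
    have hm0 : (0:ℝ) ≤ t.max' htne := t.le_max' 0 (Finset.mem_insert_self _ _)
    set m := t.max' htne with hm
    have hmlt : m < α0 := by
      refine (Finset.max'_lt_iff t htne).mpr fun b hb => ?_
      rw [ht] at hb
      rcases Finset.mem_insert.mp hb with h | h
      · rw [h]; linarith
      · exact (Finset.mem_filter.mp h).2
    set x := (m + α0) / 2 with hx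
    have hx1 : m < x := by rw [hx]; linarith
    have hx2 : x < α0 := by rw [hx]; linarith
    have hx0 : (0:ℝ) ≤ x := le_trans hm0 (le_of_lt hx1)
    refine ⟨x, α0, ?_, ?_⟩
    · intro α hα hne
      rcases lt_trichotomy α α0 with h | h | h
      · have hαm : α ≤ m := t.le_max' α (Finset.mem_insert_of_mem
          (Finset.mem_filter.mpr ⟨hα, h⟩))
        exact chi_congr_pos A hx0 (le_of_lt hpos) (by constructor <;> intro <;> linarith)
      · exact absurd h hne
      · exact chi_congr_pos A hx0 (le_of_lt hpos) (by constructor <;> intro <;> linarith)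
    · rw [chi_pos_one A hx0 hx2, chi_pos_self A hpos]
      ring

/-- One-dimensional linear independence. -/
lemma one_dim (A : Type*) [CommRing A] (s : Finset NZ) (c : NZ → A)
    (h : ∀ x : ℝ, ∑ α ∈ s, c α * chi A α.1 x = 0) : ∀ α ∈ s, c α = 0 := by
  intro α0 hα0
  obtain ⟨x, y, hc, hu⟩ := chi_sep A (s.image Subtype.val) α0.2
  have key : ∑ α ∈ s, c α * (chi A α.1 x - chi A α.1 y)
      = c α0 * (chi A α0.1 x - chi A α0.1 y) := by
    apply Finset.sum_eq_single_of_mem α0 hα0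
    intro β hβ hne
    rw [hc β.1 (Finset.mem_image_of_mem _ hβ) (fun hh => hne (Subtype.ext hh)), sub_self,
      mul_zero]
  have h2 : ∑ α ∈ s, c α * (chi A α.1 x - chi A α.1 y) = 0 := by
    simp only [mul_sub]
    rw [Finset.sum_sub_distrib, h x, h y, sub_zero]
  have h3 : c α0 * (chi A α0.1 x - chi A α0.1 y) = 0 := by rw [← key]; exact h2
  calc c α0 = c α0 * ((chi A α0.1 x - chi A α0.1 y) * (chi A α0.1 x - chi A α0.1 y)) := by
        rw [hu, mul_one]
    _ = (c α0 * (chi A α0.1 x - chi A α0.1 y)) * (chi A α0.1 x - chi A α0.1 y) := by ring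
    _ = 0 := by rw [h3, zero_mul]

lemma lc_apply (A : Type*) [CommRing A] (d : (NZ × NZ) →₀ A) (p : ℝ × ℝ) :
    Finsupp.linearCombination A (fun q : NZ × NZ => Rab A q.1.1 q.2.1) d p
      = d.sum fun q az => az * Rab A q.1.1 q.2.1 p := by
  rw [Finsupp.linearCombination_apply, Finsupp.sum, Finsupp.sum, Finset.sum_apply]
  refine Finset.sum_congr rfl fun q _ => ?_
  rw [Pi.smul_apply, smul_eq_mul]

lemma rab_indep (A : Type*) [CommRing A] :
    LinearIndependent A (fun q : NZ × NZ => Rab A q.1.1 q.2.1) := by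
  rw [linearIndependent_iff]
  intro l hl
  set S1 := l.support.image Prod.fst with hS1
  set S2 := l.support.image Prod.snd with hS2
  have hsub : l.support ⊆ S1 ×ˢ S2 := by
    intro q hq
    rw [Finset.mem_product]
    exact ⟨Finset.mem_image_of_mem _ hq, Finset.mem_image_of_mem _ hq⟩
  have hpt : ∀ x y : ℝ, ∑ a ∈ S1, (∑ b ∈ S2, l (a, b) * chi A b.1 y) * chi A a.1 x = 0 := by
    intro x y
    have h2 : ∑ q ∈ l.support, l q * Rab A q.1.1 q.2.1 (x, y) = 0 := by
      have h1 := congrFun hl (x, y)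
      rw [lc_apply, Finsupp.sum] at h1
      simpa using h1
    calc ∑ a ∈ S1, (∑ b ∈ S2, l (a, b) * chi A b.1 y) * chi A a.1 x
        = ∑ a ∈ S1, ∑ b ∈ S2, l (a, b) * Rab A a.1 b.1 (x, y) := by
          refine Finset.sum_congr rfl fun a _ => ?_
          rw [Finset.sum_mul]
          refine Finset.sum_congr rfl fun b _ => ?_
          simp only [Rab]; ring
      _ = ∑ q ∈ S1 ×ˢ S2, l q * Rab A q.1.1 q.2.1 (x, y) :=
          (Finset.sum_product S1 S2 (fun q => l q * Rab A q.1.1 q.2.1 (x, y))).symm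
      _ = ∑ q ∈ l.support, l q * Rab A q.1.1 q.2.1 (x, y) := by
          refine (Finset.sum_subset hsub fun q _ hq => ?_).symm
          rw [Finsupp.notMem_support_iff.mp hq, zero_mul]
      _ = 0 := h2
  ext q0
  simp only [Finsupp.coe_zero, Pi.zero_apply]
  by_cases hq : q0 ∈ l.support
  · have k0 : ∀ y : ℝ, ∀ a ∈ S1, (∑ b ∈ S2, l (a, b) * chi A b.1 y) = 0 := fun y =>
      one_dim A S1 (fun a => ∑ b ∈ S2, l (a, b) * chi A b.1 y) (fun x => hpt x y)
    have k1 : l (q0.1, q0.2) = 0 :=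
      one_dim A S2 (fun b => l (q0.1, b))
        (fun y => k0 y q0.1 (Finset.mem_image_of_mem _ hq)) q0.2
        (Finset.mem_image_of_mem _ hq)
    simpa using k1
  · exact Finsupp.notMem_support_iff.mp hq

noncomputable def gg (A : Type*) [CommRing A] (α β : ℝ) : (NZ × NZ) →₀ A :=
  if hα : α = 0 then 0 else if hβ : β = 0 then 0 else Finsupp.single (⟨α, hα⟩, ⟨β, hβ⟩) 1

lemma gg_eval (A : Type*) [CommRing A] (α β : ℝ) (p : ℝ × ℝ) :
    (Finsupp.linearCombination A (fun q : NZ × NZ => Rab A q.1.1 q.2.1)) (gg A α β) p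
      = chi A α p.1 * chi A β p.2 := by
  unfold gg
  split_ifs with h1 h2
  · subst h1; simp [chi_zero]
  · subst h2; simp [chi_zero]
  · rw [Finsupp.linearCombination_single, one_smul]; rfl

lemma rect_eq (A : Type*) [CommRing A] {b1 b2 c1 c2 : ℝ} (hb : b1 ≤ b2) (hc : c1 ≤ c2)
    (x y : ℝ) :
    (if b1 ≤ x ∧ x < b2 ∧ c1 ≤ y ∧ y < c2 then (1:A) else 0)
      = chi A b2 x * chi A c2 y - chi A b2 x * chi A c1 y - chi A b1 x * chi A c2 y
        + chi A b1 x * chi A c1 y := by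
  have h1 := ind_chi A hb x
  have h2 := ind_chi A hc y
  have h3 : (if b1 ≤ x ∧ x < b2 ∧ c1 ≤ y ∧ y < c2 then (1:A) else 0)
      = (if b1 ≤ x ∧ x < b2 then (1:A) else 0) * (if c1 ≤ y ∧ y < c2 then (1:A) else 0) := by
    split_ifs <;> first | ring1 | tauto
  rw [h3, h1, h2]; ring

/-- Every `A`-weighted tile is uniquely a finite `A`-linear combination of the
functions `R_{αβ}` (`α, β ≠ 0`); in particular these functions are
`A`-linearly independent. -/
theorem tile_unique_Rab_decomposition (A : Type*) [CommRing A] :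
    (∀ T : ℝ × ℝ → A, IsWeightedTile A T →
      ∃! c : ({x : ℝ // x ≠ 0} × {x : ℝ // x ≠ 0}) →₀ A,
        ∀ p : ℝ × ℝ, T p = c.sum fun q a => a * Rab A q.1.1 q.2.1 p) ∧
    LinearIndependent A
      (fun q : {x : ℝ // x ≠ 0} × {x : ℝ // x ≠ 0} => Rab A q.1.1 q.2.1) := by
  refine ⟨fun T hT => ?_, rab_indep A⟩
  obtain ⟨n, a, b1, b2, c1, c2, hb, hc, hTp⟩ := hT
  let c : (NZ × NZ) →₀ A := ∑ i, a i •
    (gg A (b2 i) (c2 i) - gg A (b2 i) (c1 i) - gg A (b1 i) (c2 i) + gg A (b1 i) (c1 i))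
  have key : ∀ p : ℝ × ℝ, T p = c.sum fun q az => az * Rab A q.1.1 q.2.1 p := by
    intro p
    rw [← lc_apply, hTp p]
    show _ = (Finsupp.linearCombination A (fun q : NZ × NZ => Rab A q.1.1 q.2.1))
      (∑ i, a i • (gg A (b2 i) (c2 i) - gg A (b2 i) (c1 i) - gg A (b1 i) (c2 i)
        + gg A (b1 i) (c1 i))) p
    rw [map_sum, Finset.sum_apply]
    refine Finset.sum_congr rfl fun i _ => ?_
    rw [map_smul, Pi.smul_apply, map_add, map_sub, map_sub, Pi.add_apply, Pi.sub_apply,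
      Pi.sub_apply, smul_eq_mul, gg_eval, gg_eval, gg_eval, gg_eval,
      rect_eq A (le_of_lt (hb i)) (le_of_lt (hc i)) p.1 p.2]
  refine ⟨c, key, fun c' hc' => ?_⟩
  have heq : Finsupp.linearCombination A (fun q : NZ × NZ => Rab A q.1.1 q.2.1) c'
      = Finsupp.linearCombination A (fun q : NZ × NZ => Rab A q.1.1 q.2.1) c := by
    funext p
    rw [lc_apply, lc_apply, ← hc' p, ← key p]
  have hz : Finsupp.linearCombination A (fun q : NZ × NZ => Rab A q.1.1 q.2.1) (c' - c) = 0 := by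
    rw [map_sub, heq, sub_self]
  have := linearIndependent_iff.mp (rab_indep A) (c' - c) hz
  exact sub_eq_zero.mp this
end

section
/- Let A be a commutative ring with unity, let R₁,…,R_n be rectangles Rᵢ = [b₁ᵢ,b₂ᵢ)×[c₁ᵢ,c₂ᵢ), and let a₁,…,a_n ∈ A. Then ∑ᵢ aᵢ·𝟙_{Rᵢ} = 0 as a function ℝ² → A if and only if ∑ᵢ aᵢ·(X^{b₂ᵢ}−X^{b₁ᵢ})(Y^{c₂ᵢ}−Y^{c₁ᵢ}) = 0 in the group algebra A[X^ℝ,Y^ℝ]. Consequently the assignment T ↦ f_T is a well-defined injective A-linear map from the A-module of A-weighted tiles into A[X^ℝ,Y^ℝ]. -/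
/-!
The `A`-linear map `A[X^ℝ, Y^ℝ] → (ℝ² → A)` sending `X^σ Y^τ` to the indicator of the quadrant
`{x < σ, y < τ}` sends `f_R` to `𝟙_R` by inclusion–exclusion, hence `∑ aᵢ f_{Rᵢ}` to the tile
`∑ aᵢ 𝟙_{Rᵢ}`. It is injective: the coefficient of `X^s Y^t` is the second difference of the
image over a box `(x, s] × (y, t]` so thin that no exponent in the support has a coordinate in
`(x, s)` or `(y, t)`.
-/

open Finset

/-- The element `(X^{b2} - X^{b1})(Y^{c2} - Y^{c1})` of the group algebra
`A[X^ℝ, Y^ℝ] = AddMonoidAlgebra A (ℝ × ℝ)`, where `X^σ Y^τ` is the monomial of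
`(σ, τ)`. -/
noncomputable def fRect (A : Type*) [CommRing A] (b1 b2 c1 c2 : ℝ) :
    AddMonoidAlgebra A (ℝ × ℝ) :=
  (AddMonoidAlgebra.single (b2, 0) 1 - AddMonoidAlgebra.single (b1, 0) 1) *
    (AddMonoidAlgebra.single (0, c2) 1 - AddMonoidAlgebra.single (0, c1) 1)

theorem Finset.exists_lt_forall_mem_Ioc_eq {α : Type*} [LinearOrder α] [NoMinOrder α]
    (U : Finset α) (s : α) : ∃ x < s, ∀ u ∈ U, u ∈ Set.Ioc x s → u = s := by
  obtain ⟨x₀, hx₀⟩ := exists_lt s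
  set L := insert x₀ (U.filter (· < s))
  have hL : L.Nonempty := insert_nonempty _ _
  refine ⟨L.max' hL, (L.max'_lt_iff hL).2 (by simp [L, hx₀]), fun u hu ⟨hxu, hus⟩ => ?_⟩
  by_contra hne
  exact (L.le_max' u (by simp [L, hu, lt_of_le_of_ne hus hne])).not_gt hxu

section StepFunctions

variable {α A : Type*} [LinearOrder α] [Ring A]

theorem ite_lt_sub_ite_lt_eq_ite_mem_Ico {b₁ b₂ : α} (h : b₁ ≤ b₂) (x : α) :
    ((if x < b₂ then 1 else 0) - (if x < b₁ then 1 else 0) : A) =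
      if b₁ ≤ x ∧ x < b₂ then 1 else 0 := by
  by_cases h₁ : x < b₁
  · simp [h₁, h₁.trans_le h, not_le.2 h₁]
  · by_cases h₂ : x < b₂ <;> simp [h₁, h₂, not_lt.1 h₁]

theorem ite_lt_sub_ite_lt_eq_ite_eq {x s u : α} (hu : u ∈ Set.Ioc x s → u = s) (hx : x < s) :
    ((if x < u then 1 else 0) - (if s < u then 1 else 0) : A) = if u = s then 1 else 0 := by
  by_cases hus : u = s
  · simp [hus, hx]
  · rw [if_neg hus]
    by_cases hxu : x < u
    · have : s < u := lt_of_not_ge fun h => hus (hu ⟨hxu, h⟩)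
      simp [hxu, this]
    · have : ¬s < u := fun h => hxu (hx.trans h)
      simp [hxu, this]

end StepFunctions

section QuadrantMap

variable {A : Type*} [Ring A]

noncomputable def quadrantIndicator (q p : ℝ × ℝ) : A :=
  (if p.1 < q.1 then 1 else 0) * (if p.2 < q.2 then 1 else 0)

variable (A) in
noncomputable def quadrantMap : AddMonoidAlgebra A (ℝ × ℝ) →ₗ[A] (ℝ × ℝ → A) :=
  Finsupp.linearCombination A quadrantIndicator ∘ₗ
    (AddMonoidAlgebra.coeffLinearEquiv A).toLinearMap

theorem quadrantMap_apply (f : AddMonoidAlgebra A (ℝ × ℝ)) (p : ℝ × ℝ) :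
    quadrantMap A f p = f.coeff.sum fun q r => r * quadrantIndicator q p := by
  simp [quadrantMap, Finsupp.linearCombination_apply, Finsupp.sum_apply']

theorem quadrantMap_single (q : ℝ × ℝ) (r : A) :
    quadrantMap A (AddMonoidAlgebra.single q r) = r • quadrantIndicator q := by
  simp [quadrantMap]

theorem coeff_eq_quadrantMap_sub (f : AddMonoidAlgebra A (ℝ × ℝ)) (s t : ℝ) :
    ∃ x < s, ∃ y < t, f.coeff (s, t) =
      quadrantMap A f (x, y) - quadrantMap A f (x, t) - quadrantMap A f (s, y) +
        quadrantMap A f (s, t) := by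
  obtain ⟨x, hx, hxs⟩ := (f.coeff.support.image Prod.fst).exists_lt_forall_mem_Ioc_eq s
  obtain ⟨y, hy, hyt⟩ := (f.coeff.support.image Prod.snd).exists_lt_forall_mem_Ioc_eq t
  refine ⟨x, hx, y, hy, ?_⟩
  have inclusion_exclusion : ∀ q ∈ f.coeff.support,
      (quadrantIndicator q (x, y) - quadrantIndicator q (x, t) - quadrantIndicator q (s, y) +
        quadrantIndicator q (s, t) : A) = if q = (s, t) then 1 else 0 := by
    intro q hq
    calc _ = ((if x < q.1 then 1 else 0) - (if s < q.1 then 1 else 0) : A) *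
          ((if y < q.2 then 1 else 0) - (if t < q.2 then 1 else 0)) := by
          simp only [quadrantIndicator]; noncomm_ring
      _ = if q = (s, t) then 1 else 0 := by
          rw [ite_lt_sub_ite_lt_eq_ite_eq (hxs _ (mem_image_of_mem _ hq)) hx,
            ite_lt_sub_ite_lt_eq_ite_eq (hyt _ (mem_image_of_mem _ hq)) hy,
            ite_zero_mul_ite_zero, one_mul]
          simp only [Prod.ext_iff]
  calc f.coeff (s, t) = f.coeff.sum fun q r => r * if q = (s, t) then 1 else 0 := by
        simp [Finsupp.sum_ite_eq']
    _ = f.coeff.sum fun q r => r * (quadrantIndicator q (x, y) - quadrantIndicator q (x, t) -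
          quadrantIndicator q (s, y) + quadrantIndicator q (s, t)) :=
        Finsupp.sum_congr fun q hq => by rw [inclusion_exclusion q hq]
    _ = _ := by
        simp only [quadrantMap_apply, mul_add, mul_sub, Finsupp.sum_add, Finsupp.sum_sub]

theorem quadrantMap_injective : Function.Injective (quadrantMap A) := by
  refine (injective_iff_map_eq_zero _).2 fun f hf => AddMonoidAlgebra.coeff_injective ?_
  ext ⟨s, t⟩
  obtain ⟨x, -, y, -, h⟩ := coeff_eq_quadrantMap_sub f s t
  simp [h, hf]

end QuadrantMap

theorem fRect_eq (A : Type*) [CommRing A] (b₁ b₂ c₁ c₂ : ℝ) :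
    fRect A b₁ b₂ c₁ c₂ =
      AddMonoidAlgebra.single (b₂, c₂) 1 - AddMonoidAlgebra.single (b₁, c₂) 1 -
        AddMonoidAlgebra.single (b₂, c₁) 1 + AddMonoidAlgebra.single (b₁, c₁) 1 := by
  simp only [fRect, sub_mul, mul_sub, AddMonoidAlgebra.single_mul_single, one_mul,
    Prod.mk_add_mk, add_zero, zero_add]
  abel

theorem quadrantMap_fRect {A : Type*} [CommRing A] {b₁ b₂ c₁ c₂ : ℝ} (hb : b₁ ≤ b₂)
    (hc : c₁ ≤ c₂) (p : ℝ × ℝ) :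
    quadrantMap A (fRect A b₁ b₂ c₁ c₂) p =
      if b₁ ≤ p.1 ∧ p.1 < b₂ ∧ c₁ ≤ p.2 ∧ p.2 < c₂ then 1 else 0 := by
  calc _ = ((if p.1 < b₂ then 1 else 0) - (if p.1 < b₁ then 1 else 0) : A) *
        ((if p.2 < c₂ then 1 else 0) - (if p.2 < c₁ then 1 else 0)) := by
        simp only [fRect_eq, map_add, map_sub, quadrantMap_single, one_smul, Pi.add_apply,
          Pi.sub_apply, quadrantIndicator]
        ring
    _ = _ := by
        rw [ite_lt_sub_ite_lt_eq_ite_mem_Ico hb, ite_lt_sub_ite_lt_eq_ite_mem_Ico hc,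
          ite_zero_mul_ite_zero, one_mul]
        simp only [and_assoc]

/-- A finite weighted sum of indicators of rectangles vanishes identically on
`ℝ²` if and only if the corresponding element
`∑ aᵢ (X^{b2ᵢ} - X^{b1ᵢ})(Y^{c2ᵢ} - Y^{c1ᵢ})` of `A[X^ℝ, Y^ℝ]` is zero.
(Consequently `T ↦ f_T` is a well-defined injective `A`-linear map.) -/
theorem tile_eq_zero_iff_poly_eq_zero (A : Type*) [CommRing A]
    (n : ℕ) (a : Fin n → A) (b1 b2 c1 c2 : Fin n → ℝ)
    (hb : ∀ i, b1 i < b2 i) (hc : ∀ i, c1 i < c2 i) :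
    (∀ p : ℝ × ℝ, (∑ i, a i *
        (if b1 i ≤ p.1 ∧ p.1 < b2 i ∧ c1 i ≤ p.2 ∧ p.2 < c2 i then 1 else 0)) = 0)
      ↔ (∑ i, a i • fRect A (b1 i) (b2 i) (c1 i) (c2 i)) = 0 := by
  have image_eq : quadrantMap A (∑ i, a i • fRect A (b1 i) (b2 i) (c1 i) (c2 i)) =
      fun p => ∑ i, a i *
        (if b1 i ≤ p.1 ∧ p.1 < b2 i ∧ c1 i ≤ p.2 ∧ p.2 < c2 i then 1 else 0) := by
    ext p
    simp [quadrantMap_fRect (hb _).le (hc _).le]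
  rw [← (injective_iff_map_eq_zero' _).1 quadrantMap_injective, image_eq, funext_iff]
  rfl
end

section
/- Let A be a commutative ring with unity, let U be an A-weighted tile, let {T_λ : λ ∈ Λ} be a collection of A-weighted tiles, and let Ĩ be the ideal of A[X^ℝ,Y^ℝ] generated by {f_{T_λ} : λ ∈ Λ}. Then {T_λ : λ ∈ Λ} A-tiles U if and only if f_U ∈ Ĩ. -/
/-!
Let `Φ` (`quadrantSum`) be the `A`-linear map sending the monomial `X^σY^τ` to the indicator of
the quadrant `[σ, ∞) × [τ, ∞)`. Inclusion–exclusion over the four corners of a rectangle gives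
`Φ f_T = T`, and `Φ (X^σY^τ g)` is the translate of `Φ g` by `(σ, τ)`. Moreover `Φ` is injective:
at an exponent `q` minimal in the support of `f`, `Φ f q` is the coefficient of `X^q` in `f`.
Since the ideal generated by the `f_{T_λ}` is the `A`-span of the products `X^σY^τ f_{T_λ}`,
applying `Φ` identifies its elements with the `A`-combinations of translates of the `T_λ`.
-/

open Finset

/-- `f` is the polynomial `f_T` of the `A`-weighted tile `T`. -/
noncomputable def IsTilePoly (A : Type*) [CommRing A] (T : ℝ × ℝ → A)
    (f : AddMonoidAlgebra A (ℝ × ℝ)) : Prop :=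
  ∃ (n : ℕ) (a : Fin n → A) (b1 b2 c1 c2 : Fin n → ℝ),
    (∀ i, b1 i < b2 i) ∧ (∀ i, c1 i < c2 i) ∧
    (∀ p, T p = ∑ i, a i *
      (if b1 i ≤ p.1 ∧ p.1 < b2 i ∧ c1 i ≤ p.2 ∧ p.2 < c2 i then 1 else 0)) ∧
    f = ∑ i, a i • fRect A (b1 i) (b2 i) (c1 i) (c2 i)

open AddMonoidAlgebra

theorem Submodule.mem_span_range_iff_exists_fin {R M ι : Type*} [Semiring R] [AddCommMonoid M]
    [Module R M] {v : ι → M} {x : M} :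
    x ∈ span R (Set.range v) ↔
      ∃ (n : ℕ) (a : Fin n → R) (i : Fin n → ι), ∑ j, a j • v (i j) = x := by
  rw [mem_span_set']
  constructor
  · rintro ⟨n, a, g, rfl⟩
    choose i hi using fun j => (g j).2
    exact ⟨n, a, i, by simp only [hi]⟩
  · rintro ⟨n, a, i, rfl⟩
    exact ⟨n, a, fun j => ⟨v (i j), i j, rfl⟩, rfl⟩

theorem AddMonoidAlgebra.mem_ideal_span_range_iff_exists_fin {k G ι : Type*} [CommSemiring k]
    [AddMonoid G] {F : ι → AddMonoidAlgebra k G} {f : AddMonoidAlgebra k G} :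
    f ∈ Ideal.span (Set.range F) ↔ ∃ (n : ℕ) (a : Fin n → k) (i : Fin n → ι) (v : Fin n → G),
      ∑ j, a j • (single (v j) 1 * F (i j)) = f := by
  rw [Ideal.span, ← Submodule.restrictScalars_mem k,
    ← Submodule.span_smul_of_span_eq_top (AddMonoidAlgebra.basis G k).span_eq,
    Set.range_smul_range, Submodule.mem_span_range_iff_exists_fin]
  simp only [basis_apply, smul_eq_mul]
  exact exists₂_congr fun n a =>
    ⟨fun ⟨i, h⟩ => ⟨_, _, h⟩, fun ⟨i, v, h⟩ => ⟨fun j => (v j, i j), h⟩⟩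

section QuadrantSum

variable (A : Type*) {G : Type*}

noncomputable def quadrantSum [Semiring A] [Preorder G] [DecidableLE G] :
    AddMonoidAlgebra A G →ₗ[A] G → A :=
  Finsupp.linearCombination A (fun q p => if q ≤ p then 1 else 0) ∘ₗ
    (coeffLinearEquiv A).toLinearMap

variable {A}

theorem quadrantSum_apply [Semiring A] [Preorder G] [DecidableLE G] (f : AddMonoidAlgebra A G)
    (p : G) :
    quadrantSum A f p = ∑ q ∈ f.coeff.support, if q ≤ p then f.coeff q else 0 := by
  simp [quadrantSum, Finsupp.linearCombination_apply, Finsupp.sum]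

theorem quadrantSum_single [Semiring A] [Preorder G] [DecidableLE G] (q : G) (a : A) (p : G) :
    quadrantSum A (single q a) p = if q ≤ p then a else 0 := by
  simp [quadrantSum]

theorem quadrantSum_injective [Ring A] [PartialOrder G] [DecidableLE G] :
    Function.Injective (quadrantSum A (G := G)) := by
  refine (injective_iff_map_eq_zero _).2 fun f hf => ?_
  by_contra hne
  obtain ⟨m, hm, hmin⟩ := Finset.exists_minimal (s := f.coeff.support) (by simpa using hne)
  have hfm := congrFun hf m
  rw [quadrantSum_apply, Finset.sum_eq_single m, if_pos le_rfl] at hfm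
  · exact Finsupp.mem_support_iff.1 hm hfm
  · intro q hq hqm
    exact if_neg fun hle => hqm (le_antisymm hle (hmin hq hle))
  · exact fun h => (h hm).elim

theorem quadrantSum_single_one_mul [Semiring A] [AddCommGroup G] [PartialOrder G]
    [IsOrderedAddMonoid G] [DecidableLE G] (v : G) (g : AddMonoidAlgebra A G) (p : G) :
    quadrantSum A (single v 1 * g) p = quadrantSum A g (p - v) := by
  induction g using AddMonoidAlgebra.induction_linear with
  | zero => simp
  | add f g hf hg => simp only [mul_add, map_add, Pi.add_apply, hf, hg]
  | single q a =>
    simp only [single_mul_single, one_mul, quadrantSum_single, le_sub_iff_add_le, add_comm q v]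

end QuadrantSum

theorem ite_le_sub_ite_le {A α : Type*} [Ring A] [LinearOrder α] {b1 b2 : α} (h : b1 ≤ b2)
    (x : α) :
    ((if b1 ≤ x then 1 else 0) - if b2 ≤ x then 1 else 0 : A) =
      if b1 ≤ x ∧ x < b2 then 1 else 0 := by
  by_cases h2 : b2 ≤ x
  · simp [h2, h.trans h2]
  · simp [not_le.1 h2]

theorem quadrantSum_fRect {A : Type*} [CommRing A] {b1 b2 c1 c2 : ℝ} (hb : b1 ≤ b2) (hc : c1 ≤ c2)
    (p : ℝ × ℝ) :
    quadrantSum A (fRect A b1 b2 c1 c2) p =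
      if b1 ≤ p.1 ∧ p.1 < b2 ∧ c1 ≤ p.2 ∧ p.2 < c2 then 1 else 0 := by
  have hcorners : quadrantSum A (fRect A b1 b2 c1 c2) p =
      ((if b1 ≤ p.1 then 1 else 0) - if b2 ≤ p.1 then 1 else 0) *
        ((if c1 ≤ p.2 then 1 else 0) - if c2 ≤ p.2 then 1 else 0) := by
    simp only [fRect, sub_mul, mul_sub, single_mul_single, map_sub, Pi.sub_apply,
      quadrantSum_single, Prod.mk_add_mk, add_zero, zero_add, mul_one, Prod.le_def, ite_and]
    split_ifs <;> ring
  rw [hcorners, ite_le_sub_ite_le hb, ite_le_sub_ite_le hc, ite_zero_mul_ite_zero, mul_one]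
  simp only [and_assoc]

theorem IsTilePoly.quadrantSum_eq {A : Type*} [CommRing A] {T : ℝ × ℝ → A}
    {f : AddMonoidAlgebra A (ℝ × ℝ)} (h : IsTilePoly A T f) : quadrantSum A f = T := by
  obtain ⟨n, a, b1, b2, c1, c2, hb, hc, hT, rfl⟩ := h
  ext p
  simp only [hT, map_sum, map_smul, Finset.sum_apply, Pi.smul_apply, smul_eq_mul,
    quadrantSum_fRect (hb _).le (hc _).le]

/-- The collection `{T_λ}` `A`-tiles `U` if and only if `f_U` lies in the ideal
of `A[X^ℝ, Y^ℝ]` generated by the `f_{T_λ}`. -/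
theorem tiles_iff_mem_ideal (A : Type*) [CommRing A] {Λ : Type*}
    (T : Λ → ℝ × ℝ → A) (F : Λ → AddMonoidAlgebra A (ℝ × ℝ))
    (hF : ∀ l, IsTilePoly A (T l) (F l))
    (U : ℝ × ℝ → A) (fU : AddMonoidAlgebra A (ℝ × ℝ)) (hU : IsTilePoly A U fU) :
    (∃ (n : ℕ) (a : Fin n → A) (lam : Fin n → Λ) (v : Fin n → ℝ × ℝ),
        ∀ p : ℝ × ℝ, U p = ∑ i, a i * T (lam i) (p.1 - (v i).1, p.2 - (v i).2))
      ↔ fU ∈ Ideal.span (Set.range F) := by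
  rw [mem_ideal_span_range_iff_exists_fin]
  refine exists₄_congr fun n a lam v => ?_
  rw [← quadrantSum_injective.eq_iff, hU.quadrantSum_eq, eq_comm, funext_iff]
  simp only [map_sum, map_smul, Finset.sum_apply, Pi.smul_apply, smul_eq_mul,
    quadrantSum_single_one_mul, (hF _).quadrantSum_eq]
  rfl
end

section
/- Let A be a commutative ring with unity, let {T_λ : λ ∈ Λ} be a collection of A-weighted lattice tiles, let I be the ideal of the Laurent-polynomial ring A[X^ℤ,Y^ℤ] = AddMonoidAlgebra A (ℤ×ℤ) generated by {f_{T_λ} : λ ∈ Λ}, and let U be an A-weighted lattice tile with f_U ∈ I. Then {T_λ : λ ∈ Λ} A-tiles U; that is, U is a finite A-linear combination of translates of the tiles T_λ. -/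
open Finset

/-- The `A`-weighted lattice tile with (finitely supported) weights `w`. -/
noncomputable def latticeTile (A : Type*) [CommRing A] (w : ℤ × ℤ →₀ A)
    (p : ℝ × ℝ) : A :=
  w (⌊p.1⌋, ⌊p.2⌋)

/-- The polynomial `f_T = ∑ w_{ij} X^i Y^j (X-1)(Y-1)` of the lattice tile with
weights `w`, as an element of the Laurent-polynomial ring
`A[X^ℤ, Y^ℤ] = AddMonoidAlgebra A (ℤ × ℤ)`. -/
noncomputable def latticePoly (A : Type*) [CommRing A] (w : ℤ × ℤ →₀ A) :
    AddMonoidAlgebra A (ℤ × ℤ) :=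
  w.sum fun ij a => AddMonoidAlgebra.single ij a *
    ((AddMonoidAlgebra.single ((1 : ℤ), (0 : ℤ)) (1 : A) - 1) *
      (AddMonoidAlgebra.single ((0 : ℤ), (1 : ℤ)) (1 : A) - 1))

/-! Since `f_T = w_T · (X - 1)(Y - 1)` and `(X - 1)(Y - 1)` is a non-zero-divisor of `A[X^ℤ, Y^ℤ]`
(a nonzero Laurent polynomial `f` with `f · X = f` would have no term of maximal `X`-degree),
`f_U ∈ (f_{T_λ})` forces `w_U ∈ (w_{T_λ})`. Multiplying weights by `X^i Y^j` translates the tile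
by `(i, j)`, so `w_U = ∑ q_λ w_{T_λ}` writes `U` as an `A`-combination of translates of the `T_λ`. -/

open AddMonoidAlgebra
open scoped nonZeroDivisors

namespace AddMonoidAlgebra

variable {R G : Type*}

lemma eq_zero_of_mul_single_one_eq_self [Semiring R] [AddGroup G] {f : R[G]} {m : G}
    (φ : G →+ ℤ) (hm : 0 < φ m) (hf : f * single m 1 = f) : f = 0 := by
  by_contra hne
  have hsupp : f.coeff.support.Nonempty := by simpa [Finsupp.support_nonempty_iff] using hne
  obtain ⟨x, hx, hmax⟩ := f.coeff.support.exists_max_image φ hsupp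
  have hshift : f.coeff (x + m) = f.coeff x := by
    simpa using congrArg (fun g : R[G] => g.coeff (x + m)) hf.symm
  have := hmax (x + m) (by simpa [Finsupp.mem_support_iff, hshift] using hx)
  rw [map_add] at this
  omega

lemma single_sub_one_mem_nonZeroDivisors [CommRing R] [AddCommGroup G] {m : G}
    (φ : G →+ ℤ) (hm : 0 < φ m) : single m (1 : R) - 1 ∈ R[G]⁰ :=
  mem_nonZeroDivisors_iff_right.mpr fun f hf =>
    eq_zero_of_mul_single_one_eq_self φ hm (by rwa [mul_sub, mul_one, sub_eq_zero] at hf)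

end AddMonoidAlgebra

theorem Ideal.mem_span_range_of_mul_mem {R ι : Type*} [CommRing R] {g x : R} {y : ι → R}
    (hg : g ∈ R⁰) (h : x * g ∈ Ideal.span (Set.range fun i => y i * g)) :
    x ∈ Ideal.span (Set.range y) := by
  rw [Set.range_comp' (· * g), Ideal.span] at h
  obtain ⟨z, hz, hzx⟩ := (Submodule.span_image (LinearMap.mulRight R g)).le h
  rwa [← (mul_cancel_right_mem_nonZeroDivisors hg).mp hzx]

section LatticeTiles

variable {A Λ : Type*} [CommRing A]

variable (A) in
noncomputable def unitSquarePoly : A[ℤ × ℤ] :=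
  (single ((1 : ℤ), (0 : ℤ)) (1 : A) - 1) * (single ((0 : ℤ), (1 : ℤ)) (1 : A) - 1)

lemma unitSquarePoly_mem_nonZeroDivisors : unitSquarePoly A ∈ A[ℤ × ℤ]⁰ :=
  mul_mem (single_sub_one_mem_nonZeroDivisors (AddMonoidHom.fst ℤ ℤ) one_pos)
    (single_sub_one_mem_nonZeroDivisors (AddMonoidHom.snd ℤ ℤ) one_pos)

lemma latticePoly_eq_mul (w : ℤ × ℤ →₀ A) :
    latticePoly A w = ofCoeff w * unitSquarePoly A := by
  rw [latticePoly, ← Finsupp.sum_mul, unitSquarePoly]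
  congr 1
  exact sum_coeff_single (ofCoeff w)

@[simp]
lemma latticeTile_zero : latticeTile A 0 = 0 := rfl

@[simp]
lemma latticeTile_add (w w' : ℤ × ℤ →₀ A) :
    latticeTile A (w + w') = latticeTile A w + latticeTile A w' := rfl

variable (A) in
noncomputable def translatesSpan (ww : Λ → (ℤ × ℤ →₀ A)) : Submodule A (ℝ × ℝ → A) :=
  Submodule.span A (Set.range fun lv : Λ × (ℝ × ℝ) =>
    LinearMap.funLeft A A (· - lv.2) (latticeTile A (ww lv.1)))

lemma funLeft_sub_mem_translatesSpan {ww : Λ → (ℤ × ℤ →₀ A)} {F : ℝ × ℝ → A}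
    (hF : F ∈ translatesSpan A ww) (v : ℝ × ℝ) :
    LinearMap.funLeft A A (· - v) F ∈ translatesSpan A ww := by
  suffices translatesSpan A ww ≤ (translatesSpan A ww).comap (LinearMap.funLeft A A (· - v)) from
    this hF
  refine Submodule.span_le.mpr ?_
  rintro _ ⟨⟨l, w⟩, rfl⟩
  refine Submodule.subset_span ⟨⟨l, v + w⟩, ?_⟩
  ext p
  simp [LinearMap.funLeft_apply, sub_sub]

lemma latticeTile_single_mul (m : ℤ × ℤ) (a : A) (f : A[ℤ × ℤ]) :
    latticeTile A (single m a * f).coeff =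
      a • LinearMap.funLeft A A (· - ((m.1 : ℝ), (m.2 : ℝ))) (latticeTile A f.coeff) := by
  ext p
  simp [latticeTile, LinearMap.funLeft_apply, neg_add_eq_sub, Prod.sub_def]

lemma latticeTile_mem_translatesSpan {ww : Λ → (ℤ × ℤ →₀ A)} {f : A[ℤ × ℤ]}
    (hf : f ∈ Ideal.span (Set.range fun l => ofCoeff (ww l))) :
    latticeTile A f.coeff ∈ translatesSpan A ww := by
  induction hf using Submodule.span_induction with
  | mem _ hx =>
    obtain ⟨l, rfl⟩ := hx
    exact Submodule.subset_span ⟨⟨l, 0⟩, by ext; simp [LinearMap.funLeft_apply]⟩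
  | zero => exact Submodule.zero_mem _
  | add x y _ _ hx hy => exact Submodule.add_mem _ hx hy
  | smul r x _ hx =>
    induction r using induction_linear with
    | zero => simp
    | add r s hr hs => simpa [add_mul] using Submodule.add_mem _ hr hs
    | single m a =>
      rw [smul_eq_mul, latticeTile_single_mul]
      exact Submodule.smul_mem _ a (funLeft_sub_mem_translatesSpan hx _)

end LatticeTiles

/-- If the polynomial of a lattice tile `U` lies in the ideal of `A[X^ℤ, Y^ℤ]`
generated by the polynomials of the lattice tiles `T_λ`, then `{T_λ}` `A`-tiles
`U`: `U` is a finite `A`-linear combination of translates of the `T_λ`. -/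
theorem lattice_tiles_of_mem_ideal (A : Type*) [CommRing A] {Λ : Type*}
    (ww : Λ → (ℤ × ℤ →₀ A)) (u : ℤ × ℤ →₀ A)
    (h : latticePoly A u ∈ Ideal.span (Set.range fun l => latticePoly A (ww l))) :
    ∃ (n : ℕ) (a : Fin n → A) (lam : Fin n → Λ) (v : Fin n → ℝ × ℝ),
      ∀ p : ℝ × ℝ, latticeTile A u p =
        ∑ i, a i * latticeTile A (ww (lam i)) (p.1 - (v i).1, p.2 - (v i).2) := by
  have hu : ofCoeff u ∈ Ideal.span (Set.range fun l => ofCoeff (ww l)) := by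
    refine Ideal.mem_span_range_of_mul_mem unitSquarePoly_mem_nonZeroDivisors ?_
    simpa only [← latticePoly_eq_mul] using h
  obtain ⟨n, a, F, hF⟩ := Submodule.mem_span_set'.mp (latticeTile_mem_translatesSpan hu)
  choose lv hlv using fun i => (F i).2
  refine ⟨n, a, fun i => (lv i).1, fun i => (lv i).2, fun p => ?_⟩
  rw [← hF]
  simp [← hlv, LinearMap.funLeft_apply, Prod.sub_def]
end

section
/- Let K be a field and let f* ∈ K[X,Y] be a nonzero polynomial whose degree in X is m−1 and whose degree in Y is n−1 (m, n ≥ 1). Assume there are α, β ∈ K^× such that: (1) α^k ≠ 1 and β^k ≠ 1 for every integer 1 ≤ k ≤ 2mn; and (2) f*(α^k, β^k) = 0 for every integer 1 ≤ k ≤ 2mn. Then there exist relatively prime integers c, d with 1 ≤ c ≤ n−1 and 1 ≤ |d| ≤ m−1 such that f*(X^c, X^d) = 0 in the Laurent polynomial ring K[X,X⁻¹] (where f*(X^c,X^d) denotes the image of f* under the K-algebra map K[X,Y] → K[X,X⁻¹] sending X ↦ X^c and Y ↦ X^d). -/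
/-!
Write `f = ∑ cₛ X^s₀ Y^s₁` and `γₛ = α^s₀ β^s₁`. The hypotheses say `∑ cₛ γₛ^k = 0` for
`1 ≤ k ≤ 2mn`; as `f` has at most `mn` terms, a Vandermonde argument shows that the coefficients
summed over each fibre of `s ↦ γₛ` vanish. Since `f ≠ 0`, some fibre contains two exponents, which
gives a relation `α^u β^v = 1` with `|u| < m`, `|v| < n`, not both zero. Two such relations
`(u, v)`, `(u', v')` give `α^(uv' - u'v) = 1` with `|uv' - u'v| ≤ 2mn`, so they are proportional.
Hence for the primitive vector `(c, d)` orthogonal to `(u, v)` the weight `c s₀ + d s₁` is constant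
on every fibre, and `f(X^c, X^d)` is a sum of monomials times vanishing fibre sums.
-/

open MvPolynomial Finset

theorem eq_zero_of_forall_sum_mul_pow_eq_zero {R : Type*} [CommRing R] [IsDomain R]
    {t : Finset R} (h0 : 0 ∉ t) {b : R → R}
    (h : ∀ k, 1 ≤ k → k ≤ #t → ∑ x ∈ t, b x * x ^ k = 0) {x : R} (hx : x ∈ t) : b x = 0 := by
  set e := t.equivFin
  have hv : (fun j ↦ b (e.symm j) * e.symm j) = 0 := by
    refine Matrix.eq_zero_of_forall_pow_sum_mul_pow_eq_zero
      (Subtype.val_injective.comp e.symm.injective) fun i ↦ ?_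
    rw [← h (i + 1) (by omega) (by omega), ← t.sum_coe_sort, ← e.symm.sum_comp]
    simp only [Function.comp_apply, mul_assoc, pow_succ']
  have := congrFun hv (e ⟨x, hx⟩)
  simp only [Equiv.symm_apply_apply, Pi.zero_apply] at this
  exact (mul_eq_zero.mp this).resolve_right (ne_of_mem_of_not_mem hx h0)

theorem sum_fiber_eq_zero_of_sum_mul_pow_eq_zero {ι K : Type*} [Field K] [DecidableEq K]
    {S : Finset ι} {γ a : ι → K} (hγ : ∀ i ∈ S, γ i ≠ 0)
    (h : ∀ k, 1 ≤ k → k ≤ #S → ∑ i ∈ S, a i * γ i ^ k = 0) (g : K) :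
    ∑ i ∈ S with γ i = g, a i = 0 := by
  by_cases hg : g ∈ S.image γ
  · refine eq_zero_of_forall_sum_mul_pow_eq_zero (t := S.image γ)
      (b := fun g ↦ ∑ i ∈ S with γ i = g, a i) (fun h0 ↦ ?_) (fun k hk1 hk2 ↦ ?_) hg
    · obtain ⟨i, hi, hi0⟩ := mem_image.mp h0
      exact hγ i hi hi0
    · rw [← h k hk1 (hk2.trans card_image_le), ← sum_fiberwise_of_maps_to
        (fun i hi ↦ mem_image_of_mem γ hi)]
      refine sum_congr rfl fun g _ ↦ ?_
      rw [sum_mul]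
      exact sum_congr rfl fun i hi ↦ by rw [(mem_filter.mp hi).2]
  · rw [sum_eq_zero]
    intro i hi
    exact absurd (mem_image.mpr ⟨i, (mem_filter.mp hi).1, (mem_filter.mp hi).2⟩) hg

theorem exists_ne_of_sum_fiber_eq_zero {ι κ R : Type*} [AddCommMonoid R] [DecidableEq κ]
    {S : Finset ι} {γ : ι → κ} {a : ι → R} (hfib : ∀ g, ∑ i ∈ S with γ i = g, a i = 0)
    {i : ι} (hi : i ∈ S) (ha : a i ≠ 0) : ∃ j ∈ S, j ≠ i ∧ γ j = γ i := by
  by_contra! hinj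
  have hfiber : {j ∈ S | γ j = γ i} = {i} := by
    ext j
    simp only [mem_filter, mem_singleton]
    refine ⟨fun ⟨hj, hγ⟩ ↦ by_contra fun hji ↦ hinj j hj hji hγ, ?_⟩
    rintro rfl
    exact ⟨hi, rfl⟩
  exact ha (by simpa [hfiber] using hfib (γ i))

theorem sum_smul_eq_zero_of_sum_fiber_eq_zero {ι κ R M : Type*} [Semiring R]
    [AddCommMonoid M] [Module R M] [DecidableEq κ] {S : Finset ι} {γ : ι → κ} {a : ι → R}
    {F : ι → M} (hfib : ∀ g, ∑ i ∈ S with γ i = g, a i = 0)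
    (hF : ∀ i ∈ S, ∀ j ∈ S, γ i = γ j → F i = F j) : ∑ i ∈ S, a i • F i = 0 := by
  rw [← sum_fiberwise_of_maps_to (fun i hi ↦ mem_image_of_mem γ hi)]
  refine sum_eq_zero fun g hg ↦ ?_
  obtain ⟨i₀, hi₀, rfl⟩ := mem_image.mp hg
  have hconst : ∀ i ∈ S.filter (γ · = γ i₀), a i • F i = a i • F i₀ := fun i hi ↦ by
    rw [hF i (mem_filter.mp hi).1 i₀ hi₀ (mem_filter.mp hi).2]
  rw [sum_congr rfl hconst, ← sum_smul, hfib, zero_smul]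

theorem exists_isCoprime_mul_add_mul_eq_zero {u v : ℤ} (hu : u ≠ 0) (hv : v ≠ 0) :
    ∃ c d : ℤ, IsCoprime c d ∧ 1 ≤ c ∧ c ≤ |v| ∧ 1 ≤ |d| ∧ |d| ≤ |u| ∧ c * u + d * v = 0 := by
  obtain ⟨g, v', u', hg, hcop, rfl, rfl⟩ := Int.exists_gcd_one' (Int.gcd_pos_of_ne_zero_left u hv)
  have hcop : IsCoprime v' u' := Int.isCoprime_iff_gcd_eq_one.mpr hcop
  have hg1 : (1 : ℤ) ≤ g := by exact_mod_cast hg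
  simp only [abs_mul, Nat.abs_cast] at hu hv ⊢
  rcases lt_or_gt_of_ne (left_ne_zero_of_mul hv) with hv' | hv'
  · refine ⟨-v', u', hcop.neg_left, by omega, ?_, ?_, ?_, by ring⟩ <;>
      nlinarith [abs_of_neg hv', abs_pos.mpr (left_ne_zero_of_mul hu)]
  · refine ⟨v', -u', hcop.neg_right, by omega, ?_, ?_, ?_, by ring⟩ <;>
      nlinarith [abs_of_pos hv', abs_neg u', abs_pos.mpr (left_ne_zero_of_mul hu)]

theorem zpow_ne_one_of_pow_ne_one {G : Type*} [Group G] {a : G} {N : ℕ}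
    (h : ∀ k : ℕ, 1 ≤ k → k ≤ N → a ^ k ≠ 1) {w : ℤ} (hw : w ≠ 0) (hwN : |w| ≤ N) :
    a ^ w ≠ 1 := by
  rw [ne_eq, ← pow_natAbs_eq_one]
  rw [Int.abs_eq_natAbs] at hwN
  exact h _ (Int.natAbs_pos.mpr hw) (by exact_mod_cast hwN)

theorem zpow_mul_sub_mul_eq_one {G : Type*} [CommGroup G] {a b : G} {u v u' v' : ℤ}
    (h : a ^ u * b ^ v = 1) (h' : a ^ u' * b ^ v' = 1) : a ^ (u * v' - u' * v) = 1 := by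
  calc a ^ (u * v' - u' * v) = (a ^ u * b ^ v) ^ v' / (a ^ u' * b ^ v') ^ v := by
        rw [mul_zpow, mul_zpow, ← zpow_mul, ← zpow_mul, ← zpow_mul, ← zpow_mul, mul_comm v v',
          mul_div_mul_right_eq_div, zpow_sub, div_eq_mul_inv]
    _ = 1 := by rw [h, h', one_zpow, one_zpow, div_one]

theorem zpow_sub_mul_zpow_sub_eq_one {G : Type*} [CommGroup G] {a b : G} {s₀ s₁ t₀ t₁ : ℕ}
    (h : a ^ s₀ * b ^ s₁ = a ^ t₀ * b ^ t₁) : a ^ ((s₀ : ℤ) - t₀) * b ^ ((s₁ : ℤ) - t₁) = 1 := by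
  rw [zpow_sub, zpow_sub, ← div_eq_mul_inv, ← div_eq_mul_inv, div_mul_div_comm, div_eq_one]
  exact_mod_cast h

theorem exists_isCoprime_forall_zpow_mul_zpow_eq_one {G : Type*} [CommGroup G] {a b : G}
    {m n : ℕ} (ha : ∀ k : ℕ, 1 ≤ k → k ≤ 2 * m * n → a ^ k ≠ 1)
    (hb : ∀ k : ℕ, 1 ≤ k → k ≤ 2 * m * n → b ^ k ≠ 1) {u₀ v₀ : ℤ} (h₀ : a ^ u₀ * b ^ v₀ = 1)
    (hne : u₀ ≠ 0 ∨ v₀ ≠ 0) (hu₀ : |u₀| ≤ (m : ℤ) - 1) (hv₀ : |v₀| ≤ (n : ℤ) - 1) :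
    ∃ c d : ℤ, IsCoprime c d ∧ 1 ≤ c ∧ c ≤ (n : ℤ) - 1 ∧ 1 ≤ |d| ∧ |d| ≤ (m : ℤ) - 1 ∧
      ∀ u v : ℤ, a ^ u * b ^ v = 1 → |u| ≤ (m : ℤ) - 1 → |v| ≤ (n : ℤ) - 1 →
        c * u + d * v = 0 := by
  have hu₀' : u₀ ≠ 0 := by
    rintro rfl
    refine zpow_ne_one_of_pow_ne_one hb (hne.resolve_left (not_not.mpr rfl)) ?_
      (by simpa using h₀)
    rw [abs_zero] at hu₀
    push_cast
    nlinarith [abs_nonneg v₀]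
  have hv₀' : v₀ ≠ 0 := by
    rintro rfl
    refine zpow_ne_one_of_pow_ne_one ha hu₀' ?_ (by simpa using h₀)
    rw [abs_zero] at hv₀
    push_cast
    nlinarith [abs_nonneg u₀]
  obtain ⟨c, d, hcd, hc1, hc, hd1, hd, horth⟩ := exists_isCoprime_mul_add_mul_eq_zero hu₀' hv₀'
  refine ⟨c, d, hcd, hc1, hc.trans hv₀, hd1, hd.trans hu₀, fun u v h hu hv ↦ ?_⟩
  have hcross : u₀ * v = u * v₀ := by
    by_contra hne
    refine zpow_ne_one_of_pow_ne_one ha (sub_ne_zero.mpr hne) ?_ (zpow_mul_sub_mul_eq_one h₀ h)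
    calc |u₀ * v - u * v₀| ≤ |u₀| * |v| + |u| * |v₀| := by
          rw [← abs_mul, ← abs_mul]; exact abs_sub _ _
      _ ≤ 2 * m * n := by nlinarith [abs_nonneg u₀, abs_nonneg v₀, abs_nonneg u, abs_nonneg v]
  refine mul_left_cancel₀ hu₀' ?_
  linear_combination u * horth + d * hcross

theorem exists_isCoprime_weight_eq_of_pow_mul_pow_eq {G : Type*} [CommGroup G] {a b : G}
    {m n : ℕ} (ha : ∀ k : ℕ, 1 ≤ k → k ≤ 2 * m * n → a ^ k ≠ 1)
    (hb : ∀ k : ℕ, 1 ≤ k → k ≤ 2 * m * n → b ^ k ≠ 1) {S : Finset (Fin 2 →₀ ℕ)}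
    (hS : ∀ s ∈ S, s 0 < m ∧ s 1 < n) {s t : Fin 2 →₀ ℕ} (hs : s ∈ S) (ht : t ∈ S)
    (hst : s ≠ t) (h : a ^ s 0 * b ^ s 1 = a ^ t 0 * b ^ t 1) :
    ∃ c d : ℤ, IsCoprime c d ∧ 1 ≤ c ∧ c ≤ (n : ℤ) - 1 ∧ 1 ≤ |d| ∧ |d| ≤ (m : ℤ) - 1 ∧
      ∀ s ∈ S, ∀ t ∈ S, a ^ s 0 * b ^ s 1 = a ^ t 0 * b ^ t 1 →
        (s 0 : ℤ) * c + s 1 * d = t 0 * c + t 1 * d := by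
  have hbd : ∀ s ∈ S, ∀ t ∈ S,
      |(s 0 : ℤ) - t 0| ≤ (m : ℤ) - 1 ∧ |(s 1 : ℤ) - t 1| ≤ (n : ℤ) - 1 := fun s hs t ht ↦ by
    have := hS s hs
    have := hS t ht
    simp only [abs_sub_le_iff]
    omega
  have hne : (s 0 : ℤ) - t 0 ≠ 0 ∨ (s 1 : ℤ) - t 1 ≠ 0 := by
    by_contra! h
    exact hst (Finsupp.ext (Fin.forall_fin_two.mpr ⟨by omega, by omega⟩))
  obtain ⟨c, d, hcd, hc1, hc, hd1, hd, horth⟩ := exists_isCoprime_forall_zpow_mul_zpow_eq_one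
    ha hb (zpow_sub_mul_zpow_sub_eq_one h) hne (hbd s hs t ht).1 (hbd s hs t ht).2
  refine ⟨c, d, hcd, hc1, hc, hd1, hd, fun s hs t ht hst ↦ ?_⟩
  linear_combination horth _ _ (zpow_sub_mul_zpow_sub_eq_one hst) (hbd s hs t ht).1
    (hbd s hs t ht).2

theorem aeval_fin_two_eq_sum {R A : Type*} [CommSemiring R] [CommSemiring A] [Algebra R A]
    (f : MvPolynomial (Fin 2) R) (x y : A) :
    aeval ![x, y] f = ∑ s ∈ f.support, f.coeff s • (x ^ s 0 * y ^ s 1) := by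
  simp only [aeval_def, eval₂_eq', Fin.prod_univ_two, Algebra.smul_def, Matrix.cons_val_zero,
    Matrix.cons_val_one]

theorem card_support_le_degreeOf_mul {R : Type*} [CommSemiring R] (f : MvPolynomial (Fin 2) R) :
    #f.support ≤ (f.degreeOf 0 + 1) * (f.degreeOf 1 + 1) := by
  rw [← card_range (f.degreeOf 0 + 1), ← card_range (f.degreeOf 1 + 1), ← card_product]
  refine card_le_card_of_injOn (fun s ↦ (s 0, s 1)) (fun s hs ↦ ?_) fun s _ t _ hst ↦ ?_
  · simp only [coe_product, coe_range, Set.mem_prod, Set.mem_Iio, Nat.lt_succ_iff]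
    exact ⟨monomial_le_degreeOf 0 hs, monomial_le_degreeOf 1 hs⟩
  · exact Finsupp.ext (Fin.forall_fin_two.mpr (Prod.ext_iff.mp hst))

/-- Barnes-type lemma: if a nonzero `f* ∈ K[X,Y]` of `X`-degree `m-1` and
`Y`-degree `n-1` vanishes at `(α^k, β^k)` for `1 ≤ k ≤ 2mn`, where `α, β ∈ K^×`
are not `k`-th roots of unity for any `1 ≤ k ≤ 2mn`, then `f*(X^c, X^d) = 0` in
`K[X, X⁻¹]` for some coprime `c, d` with `1 ≤ c ≤ n-1` and `1 ≤ |d| ≤ m-1`. -/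
theorem poly_vanishes_on_powers (K : Type*) [Field K]
    (f : MvPolynomial (Fin 2) K) (hf : f ≠ 0)
    (m n : ℕ) (hm : 1 ≤ m) (hn : 1 ≤ n)
    (hdX : f.degreeOf 0 = m - 1) (hdY : f.degreeOf 1 = n - 1)
    (α β : K) (hα : α ≠ 0) (hβ : β ≠ 0)
    (hroots : ∀ k : ℕ, 1 ≤ k → k ≤ 2 * m * n → α ^ k ≠ 1 ∧ β ^ k ≠ 1)
    (hzero : ∀ k : ℕ, 1 ≤ k → k ≤ 2 * m * n → eval ![α ^ k, β ^ k] f = 0) :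
    ∃ c d : ℤ, IsCoprime c d ∧ 1 ≤ c ∧ c ≤ (n : ℤ) - 1 ∧
      1 ≤ |d| ∧ |d| ≤ (m : ℤ) - 1 ∧
      (aeval ![LaurentPolynomial.T c, LaurentPolynomial.T d] f : LaurentPolynomial K) = 0 := by
  classical
  set a := Units.mk0 α hα
  set b := Units.mk0 β hβ
  let γ : (Fin 2 →₀ ℕ) → K := fun s ↦ ((a ^ s 0 * b ^ s 1 : Kˣ) : K)
  have hcard : #f.support ≤ 2 * m * n := by
    have := card_support_le_degreeOf_mul f
    rw [hdX, hdY, Nat.sub_add_cancel hm, Nat.sub_add_cancel hn] at this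
    nlinarith
  have hfib : ∀ g, ∑ s ∈ f.support with γ s = g, f.coeff s = 0 := by
    refine sum_fiber_eq_zero_of_sum_mul_pow_eq_zero (fun s _ ↦ Units.ne_zero _) fun k hk1 hk2 ↦ ?_
    rw [← hzero k hk1 (hk2.trans hcard), show eval ![α ^ k, β ^ k] f = aeval ![α ^ k, β ^ k] f
      from rfl, aeval_fin_two_eq_sum]
    refine sum_congr rfl fun s _ ↦ ?_
    simp [γ, a, b, ← pow_mul, mul_pow, mul_comm]
  have hS : ∀ s ∈ f.support, s 0 < m ∧ s 1 < n := fun s hs ↦ by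
    have := monomial_le_degreeOf 0 hs
    have := monomial_le_degreeOf 1 hs
    omega
  obtain ⟨s, hs⟩ := support_nonempty.mpr hf
  obtain ⟨t, ht, hts, hγ⟩ := exists_ne_of_sum_fiber_eq_zero hfib hs (mem_support_iff.mp hs)
  obtain ⟨c, d, hcd, hc1, hc, hd1, hd, hweight⟩ := exists_isCoprime_weight_eq_of_pow_mul_pow_eq
    (fun k hk1 hk2 h ↦ (hroots k hk1 hk2).1 (by simpa [a] using congrArg Units.val h))
    (fun k hk1 hk2 h ↦ (hroots k hk1 hk2).2 (by simpa [b] using congrArg Units.val h))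
    hS ht hs hts (Units.val_injective hγ)
  refine ⟨c, d, hcd, hc1, hc, hd1, hd, ?_⟩
  simp only [aeval_fin_two_eq_sum, LaurentPolynomial.T_pow, ← LaurentPolynomial.T_add]
  exact sum_smul_eq_zero_of_sum_fiber_eq_zero hfib fun s hs t ht hst ↦
    congrArg _ (hweight s hs t ht (Units.val_injective hst))
end

section
/- Let T be a ℤ-weighted lattice tile with weights w : ℤ×ℤ → ℤ, let n be a positive integer, and let c, d be relatively prime integers with d ≠ 0; set μ = −c/d. Then every μ-slope class of T has weighted area divisible by n (i.e., n divides ∑_{r∈ℤ} w_{(i+rd, j−rc)} for every (i,j) ∈ ℤ×ℤ) if and only if f_T lies in the ideal of ℤ[X^ℤ,Y^ℤ] generated by (X^d−Y^c)(X−1)(Y−1) and n(X−1)(Y−1). -/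
/-!
Let `φ : ℤ[X^ℤ, Y^ℤ] → ℤ[T^ℤ]` be induced by the surjection `(i, j) ↦ c i + d j`, whose fibres
are the slope classes, so that the coefficients of `φ (∑ w_{ij} X^i Y^j)` are the weighted areas
of the classes. The kernel of `(i, j) ↦ c i + d j` is generated by `(d, -c)`, hence `ker φ` is
generated by `X^d Y^{-c} - 1`, a unit multiple of `X^d - Y^c`. Cancelling the nonzero factor
`(X - 1)(Y - 1)` in the domain `ℤ[X^ℤ, Y^ℤ]`, membership of `f_T` in the ideal becomes
`φ (∑ w_{ij} X^i Y^j) ∈ (n)`, i.e. divisibility of all weighted areas by `n`.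
-/

open Function

/-- The polynomial `f_T = ∑ w_{ij} X^i Y^j (X-1)(Y-1)` of the lattice tile with
weights `w`, in `ℤ[X^ℤ, Y^ℤ] = AddMonoidAlgebra ℤ (ℤ × ℤ)`. -/
noncomputable def latticePolyZ (w : ℤ × ℤ →₀ ℤ) : AddMonoidAlgebra ℤ (ℤ × ℤ) :=
  w.sum fun ij a => AddMonoidAlgebra.single ij a *
    ((AddMonoidAlgebra.single ((1 : ℤ), (0 : ℤ)) (1 : ℤ) - 1) *
      (AddMonoidAlgebra.single ((0 : ℤ), (1 : ℤ)) (1 : ℤ) - 1))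

theorem Finsupp.mapDomain_apply_eq_finsum {α β M : Type*} [AddCommMonoid M] (f : α → β)
    (x : α →₀ M) (b : β) : mapDomain f x b = ∑ᶠ a ∈ f ⁻¹' {b}, x a := by
  classical
  rw [finsum_mem_def, finsum_eq_sum_of_support_subset _ (s := x.support) ?_]
  · simp [mapDomain, Finsupp.sum, single_apply, Set.indicator_apply]
  · intro a ha
    simp_all

namespace Ideal

variable {R S : Type*} [CommRing R] [CommRing S]

theorem mul_mem_span_pair_mul_right_iff [IsDomain R] {p : R} (hp : p ≠ 0) {x a b : R} :
    x * p ∈ span {a * p, b * p} ↔ x ∈ span {a, b} := by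
  simp only [mem_span_pair]
  refine exists₂_congr fun u v ↦ ⟨fun h ↦ mul_right_cancel₀ hp ?_, fun h ↦ ?_⟩
  · linear_combination h
  · linear_combination p * h

theorem mem_span_pair_iff_of_ker_eq {f : R →+* S} (hf : Surjective f) {a b x : R}
    (hker : RingHom.ker f = span {a}) : x ∈ span {a, b} ↔ f x ∈ span {f b} := by
  rw [← mem_comap, ← Set.image_singleton, ← map_span, comap_map_of_surjective' f hf, hker,
    ← span_union, Set.union_comm, Set.singleton_union]

end Ideal

namespace AddMonoidAlgebra

theorem natCast_dvd_iff {G : Type*} [AddMonoid G] (n : ℕ) (x : AddMonoidAlgebra ℤ G) :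
    (n : AddMonoidAlgebra ℤ G) ∣ x ↔ ∀ g, (n : ℤ) ∣ x.coeff g := by
  refine ⟨?_, fun h ↦ ⟨ofCoeff (x.coeff.mapRange (· / (n : ℤ)) (Int.zero_ediv _)), ?_⟩⟩
  · rintro ⟨y, rfl⟩ g
    rw [natCast_def, coeff_single_zero_mul]
    exact ⟨_, rfl⟩
  · ext g
    rw [natCast_def, coeff_single_zero_mul]
    simp [Int.mul_ediv_cancel' (h g)]

variable {k G H : Type*} [CommRing k] [AddCommGroup G] [AddCommGroup H]

theorem single_sub_one_ne_zero [Nontrivial k] {g : G} (hg : g ≠ 0) :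
    single g (1 : k) - 1 ≠ 0 := by
  rw [sub_ne_zero, one_def, Ne, single_left_inj one_ne_zero]
  exact hg

theorem isUnit_single_one (g : G) : IsUnit (single g (1 : k)) :=
  .of_mul_eq_one (single (-g) 1) (by rw [single_mul_single, add_neg_cancel, one_mul, one_def])

theorem single_add_sub_one (a b : G) :
    single (a + b) (1 : k) - 1 = single a 1 * (single b 1 - 1) + (single a 1 - 1) := by
  rw [mul_sub, single_mul_single, mul_one, mul_one]
  ring

theorem single_sub_one_dvd_single_zsmul_sub_one (g : G) (r : ℤ) :
    single g (1 : k) - 1 ∣ single (r • g) 1 - 1 := by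
  induction r with
  | zero => simp [one_def]
  | succ r ih =>
    rw [add_smul, one_smul, single_add_sub_one]
    exact dvd_add (dvd_mul_left _ _) ih
  | pred r ih =>
    rw [← sub_add_cancel (-(r : ℤ)) 1, add_smul, one_smul, single_add_sub_one] at ih
    exact (dvd_add_right (dvd_mul_left _ _)).mp ih

theorem span_single_sub_one_zmultiples (g : G) :
    Ideal.span ((fun x ↦ single x (1 : k) - 1) '' (AddSubgroup.zmultiples g : Set G)) =
      Ideal.span {single g (1 : k) - 1} := by
  refine le_antisymm (Ideal.span_le.2 ?_) (Ideal.span_mono ?_)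
  · rintro _ ⟨_, ⟨r, rfl⟩, rfl⟩
    exact Ideal.mem_span_singleton.2 (single_sub_one_dvd_single_zsmul_sub_one g r)
  · simpa using ⟨g, AddSubgroup.mem_zmultiples g, rfl⟩

theorem mapDomainRingHom_surjective {f : G →+ H} (hf : Surjective f) :
    Surjective (mapDomainRingHom k f) := fun y ↦
  ⟨ofCoeff (Finsupp.mapDomain (surjInv hf) y.coeff), by
    ext; simp [← Finsupp.mapDomain_comp, comp_surjInv]⟩

theorem ker_mapDomainRingHom {f : G →+ H} (hf : Surjective f) :
    RingHom.ker (mapDomainRingHom k f) = Ideal.span ((fun g ↦ single g 1 - 1) '' f.ker) := by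
  refine le_antisymm (fun x hx ↦ ?_) (Ideal.span_le.2 ?_)
  · -- Moving every point to a chosen representative of its `f`-fibre changes `x` only by an
    -- element of the ideal, and kills `x` because the move factors through `f`.
    set t : G → G := surjInv hf ∘ f
    have hsub : ∀ y : k[G], y - mapDomain t y ∈
        Ideal.span ((fun g ↦ single g 1 - 1) '' f.ker) := by
      intro y
      induction y using induction_linear with
      | zero => simp
      | add y z hy hz =>
        rw [mapDomain_add, add_sub_add_comm]
        exact add_mem hy hz
      | single g a =>
        have hg : t g - g ∈ f.ker := by simp [t, surjInv_eq hf]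
        have hdiff : single g a - mapDomain t (single g a) =
            -(single g a * (single (t g - g) 1 - 1)) := by
          rw [mapDomain_single, mul_sub, single_mul_single, mul_one, mul_one, add_sub_cancel]
          ring
        rw [hdiff]
        exact neg_mem (Ideal.mul_mem_left _ _ (Ideal.subset_span ⟨_, hg, rfl⟩))
    have hzero : mapDomain t x = 0 := by
      have : mapDomain t x = mapDomain (surjInv hf) (mapDomainRingHom k f x) := by
        ext; simp [t, Finsupp.mapDomain_comp]
      rw [this, RingHom.mem_ker.1 hx, mapDomain_zero]
    simpa [hzero] using hsub x
  · rintro _ ⟨g, hg, rfl⟩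
    rw [SetLike.mem_coe, RingHom.mem_ker, map_sub, map_one, mapDomainRingHom_apply,
      mapDomain_single, AddMonoidHom.mem_ker.1 hg, one_def, sub_self]

end AddMonoidAlgebra

open AddMonoidAlgebra

/-- The `(-c/d)`-slope classes of `ℤ × ℤ` are the fibres of this form. -/
def slopeForm (c d : ℤ) : ℤ × ℤ →+ ℤ where
  toFun p := c * p.1 + d * p.2
  map_zero' := by simp
  map_add' p q := by simp only [Prod.fst_add, Prod.snd_add]; ring

section SlopeForm

variable {c d : ℤ}

theorem slopeForm_surjective (hcd : IsCoprime c d) : Surjective (slopeForm c d) := by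
  obtain ⟨a, b, hab⟩ := hcd
  refine fun k ↦ ⟨(a * k, b * k), ?_⟩
  change c * (a * k) + d * (b * k) = k
  linear_combination k * hab

theorem ker_slopeForm (hcd : IsCoprime c d) :
    (slopeForm c d).ker = AddSubgroup.zmultiples (d, -c) := by
  obtain ⟨a, b, hab⟩ := hcd
  ext ⟨i, j⟩
  rw [AddMonoidHom.mem_ker, AddSubgroup.mem_zmultiples_iff]
  change c * i + d * j = 0 ↔ ∃ r : ℤ, (r * d, r * -c) = (i, j)
  constructor
  · intro h
    refine ⟨b * i - a * j, Prod.ext ?_ ?_⟩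
    · linear_combination (-a) * h + i * hab
    · linear_combination (-b) * h + j * hab
  · rintro ⟨r, hr⟩
    simp only [Prod.mk.injEq] at hr
    rw [← hr.1, ← hr.2]
    ring

theorem finsum_slopeClass_eq_mapDomain_apply (hcd : IsCoprime c d) (w : ℤ × ℤ →₀ ℤ)
    (i j : ℤ) :
    ∑ᶠ r : ℤ, w (i + r * d, j - r * c) =
      Finsupp.mapDomain (slopeForm c d) w (c * i + d * j) := by
  obtain ⟨a, b, hab⟩ := id hcd
  have hinj : Injective fun r : ℤ ↦ ((i + r * d, j - r * c) : ℤ × ℤ) := by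
    intro r s hrs
    simp only [Prod.mk.injEq] at hrs
    linear_combination b * hrs.1 - a * hrs.2 - (r - s) * hab
  have hfiber : slopeForm c d ⁻¹' {c * i + d * j} =
      Set.range fun r : ℤ ↦ (i + r * d, j - r * c) := by
    ext ⟨p, q⟩
    rw [Set.mem_preimage, Set.mem_singleton_iff, Set.mem_range,
      show c * i + d * j = slopeForm c d (i, j) from rfl, ← sub_eq_zero, ← map_sub,
      ← AddMonoidHom.mem_ker, ker_slopeForm hcd, AddSubgroup.mem_zmultiples_iff]
    refine exists_congr fun r ↦ ?_
    simp only [Prod.smul_mk, smul_eq_mul, Prod.mk_sub_mk, Prod.mk.injEq]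
    constructor <;> rintro ⟨h₁, h₂⟩ <;> constructor <;> linarith
  rw [Finsupp.mapDomain_apply_eq_finsum, hfiber, finsum_mem_range hinj]

theorem ker_mapDomainRingHom_slopeForm {k : Type*} [CommRing k] (hcd : IsCoprime c d) :
    RingHom.ker (mapDomainRingHom k (slopeForm c d)) =
      Ideal.span {single (d, 0) 1 - single (0, c) 1} := by
  have hgen : single (d, -c) (1 : k) - 1 =
      single (0, -c) 1 * (single (d, 0) 1 - single (0, c) 1) := by
    simp [mul_sub, single_mul_single, one_def, Prod.zero_eq_mk]
  rw [ker_mapDomainRingHom (slopeForm_surjective hcd), ker_slopeForm hcd,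
    span_single_sub_one_zmultiples, hgen, Ideal.span_singleton_mul_left_unit (isUnit_single_one _)]

end SlopeForm

theorem latticePolyZ_eq_ofCoeff_mul (w : ℤ × ℤ →₀ ℤ) :
    latticePolyZ w = ofCoeff w * ((single ((1 : ℤ), (0 : ℤ)) (1 : ℤ) - 1) *
      (single ((0 : ℤ), (1 : ℤ)) (1 : ℤ) - 1)) := by
  rw [latticePolyZ, ← Finsupp.sum_mul]
  congr 1
  exact sum_coeff_single (ofCoeff w)

theorem slope_classes_divisible_iff_mem_ideal_general (w : ℤ × ℤ →₀ ℤ)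
    (n : ℕ) (c d : ℤ) (hcd : IsCoprime c d) :
    (∀ i j : ℤ, (n : ℤ) ∣ ∑ᶠ r : ℤ, w (i + r * d, j - r * c)) ↔
      latticePolyZ w ∈ Ideal.span
        {(AddMonoidAlgebra.single (d, (0 : ℤ)) (1 : ℤ) -
            AddMonoidAlgebra.single ((0 : ℤ), c) (1 : ℤ)) *
          ((AddMonoidAlgebra.single ((1 : ℤ), (0 : ℤ)) (1 : ℤ) - 1) *
            (AddMonoidAlgebra.single ((0 : ℤ), (1 : ℤ)) (1 : ℤ) - 1)),
         (n : AddMonoidAlgebra ℤ (ℤ × ℤ)) *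
          ((AddMonoidAlgebra.single ((1 : ℤ), (0 : ℤ)) (1 : ℤ) - 1) *
            (AddMonoidAlgebra.single ((0 : ℤ), (1 : ℤ)) (1 : ℤ) - 1))} := by
  have hP : (single ((1 : ℤ), (0 : ℤ)) (1 : ℤ) - 1) *
      (single ((0 : ℤ), (1 : ℤ)) (1 : ℤ) - 1) ≠ 0 :=
    mul_ne_zero (single_sub_one_ne_zero (by simp)) (single_sub_one_ne_zero (by simp))
  rw [latticePolyZ_eq_ofCoeff_mul, Ideal.mul_mem_span_pair_mul_right_iff hP,
    Ideal.mem_span_pair_iff_of_ker_eq (mapDomainRingHom_surjective (slopeForm_surjective hcd))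
      (ker_mapDomainRingHom_slopeForm hcd),
    map_natCast, Ideal.mem_span_singleton, natCast_dvd_iff]
  simp_rw [finsum_slopeClass_eq_mapDomain_apply hcd]
  refine ⟨fun h k ↦ ?_, fun h i j ↦ h _⟩
  obtain ⟨⟨i, j⟩, rfl⟩ := slopeForm_surjective hcd k
  exact h i j

/-- For `μ = -c/d` with `c, d` coprime and `d ≠ 0`, every `μ`-slope class of a
ℤ-weighted lattice tile `T` has weighted area divisible by `n` if and only if
`f_T` lies in the ideal of `ℤ[X^ℤ, Y^ℤ]` generated by `(X^d - Y^c)(X-1)(Y-1)`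
and `n(X-1)(Y-1)`. -/
theorem slope_classes_divisible_iff_mem_ideal (w : ℤ × ℤ →₀ ℤ)
    (n : ℕ) (hn : 0 < n) (c d : ℤ) (hcd : IsCoprime c d) (hd : d ≠ 0) :
    (∀ i j : ℤ, (n : ℤ) ∣ ∑ᶠ r : ℤ, w (i + r * d, j - r * c)) ↔
      latticePolyZ w ∈ Ideal.span
        {(AddMonoidAlgebra.single (d, (0 : ℤ)) (1 : ℤ) -
            AddMonoidAlgebra.single ((0 : ℤ), c) (1 : ℤ)) *
          ((AddMonoidAlgebra.single ((1 : ℤ), (0 : ℤ)) (1 : ℤ) - 1) *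
            (AddMonoidAlgebra.single ((0 : ℤ), (1 : ℤ)) (1 : ℤ) - 1)),
         (n : AddMonoidAlgebra ℤ (ℤ × ℤ)) *
          ((AddMonoidAlgebra.single ((1 : ℤ), (0 : ℤ)) (1 : ℤ) - 1) *
            (AddMonoidAlgebra.single ((0 : ℤ), (1 : ℤ)) (1 : ℤ) - 1))} :=
  slope_classes_divisible_iff_mem_ideal_general w n c d hcd
end

section
/- Let T : ℝ² → ℤ be the L-shaped tromino tile T = 𝟙_{[0,2)×[0,2)} − 𝟙_{[1,2)×[1,2)}. Then the set {T, T(2), T(3)} of rescalings of T ℤ-tiles a 3×3 square; that is, there exist finitely many integers aᵢ and tiles T̃ᵢ, each an integer translate of T, T(2) or T(3), such that 𝟙_{[1,4)×[1,4)} = ∑ᵢ aᵢ·T̃ᵢ as functions ℝ² → ℤ. -/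
open Finset

/-- Indicator (with value 1) of the rectangle `[b1,b2) × [c1,c2)`, ℤ-valued. -/
noncomputable def rectIndZ (b1 b2 c1 c2 : ℝ) (p : ℝ × ℝ) : ℤ :=
  if b1 ≤ p.1 ∧ p.1 < b2 ∧ c1 ≤ p.2 ∧ p.2 < c2 then 1 else 0

noncomputable def f (a b x : ℝ) : ℤ := if a ≤ x ∧ x < b then 1 else 0

lemma rect_f (b1 b2 c1 c2 x y : ℝ) :
    rectIndZ b1 b2 c1 c2 (x, y) = f b1 b2 x * f c1 c2 y := by
  simp only [rectIndZ, f]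
  split_ifs with h h1 h2 <;> simp_all <;> tauto

lemma f_scale (a b v r x : ℝ) (hr : 0 < r) :
    f a b ((x - v) / r) = f (v + r * a) (v + r * b) x := by
  simp only [f]
  congr 1
  rw [eq_iff_iff, le_div_iff₀ hr, div_lt_iff₀ hr]
  constructor <;> rintro ⟨h1, h2⟩ <;> constructor <;> linarith

lemma fs1 (a b v x : ℝ) : f a b ((x - v) / 1) = f (v + a) (v + b) x := by
  have := f_scale a b v 1 x one_pos; simpa using this

lemma fs2 (a b v x : ℝ) : f a b ((x - v) / 2) = f (v + 2 * a) (v + 2 * b) x :=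
  f_scale a b v 2 x two_pos

lemma fs3 (a b v x : ℝ) : f a b ((x - v) / 3) = f (v + 3 * a) (v + 3 * b) x :=
  f_scale a b v 3 x three_pos

lemma fsplit (a b c x : ℝ) (hab : a ≤ b) (hbc : b ≤ c) :
    f a c x = f a b x + f b c x := by
  simp only [f]
  rcases lt_or_ge x b with h | h
  · have h2 : ¬(b ≤ x ∧ x < c) := by rintro ⟨h1, _⟩; linarith
    have h3 : (a ≤ x ∧ x < c) ↔ (a ≤ x ∧ x < b) := by
      constructor <;> rintro ⟨u, v⟩ <;> exact ⟨u, by linarith⟩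
    rw [if_neg h2, if_congr h3 rfl rfl, add_zero]
  · have h2 : ¬(a ≤ x ∧ x < b) := by rintro ⟨_, h1⟩; linarith
    have h3 : (a ≤ x ∧ x < c) ↔ (b ≤ x ∧ x < c) := by
      constructor <;> rintro ⟨u, v⟩ <;> exact ⟨by linarith, v⟩
    rw [if_neg h2, if_congr h3 rfl rfl, zero_add]

lemma fsplit_0_2 (x : ℝ) : f 0 2 x = f 0 1 x + f 1 2 x := by
  rw [fsplit 0 1 2 x (by norm_num) (by norm_num)]
  try ring

lemma fsplit_0_4 (x : ℝ) : f 0 4 x = f 0 1 x + f 1 2 x + f 2 3 x + f 3 4 x := by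
  rw [fsplit 0 1 4 x (by norm_num) (by norm_num), fsplit 1 2 4 x (by norm_num) (by norm_num), fsplit 2 3 4 x (by norm_num) (by norm_num)]
  try ring

lemma fsplit_0_6 (x : ℝ) : f 0 6 x = f 0 1 x + f 1 2 x + f 2 3 x + f 3 4 x + f 4 5 x + f 5 6 x := by
  rw [fsplit 0 1 6 x (by norm_num) (by norm_num), fsplit 1 2 6 x (by norm_num) (by norm_num), fsplit 2 3 6 x (by norm_num) (by norm_num), fsplit 3 4 6 x (by norm_num) (by norm_num), fsplit 4 5 6 x (by norm_num) (by norm_num)]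
  try ring

lemma fsplit_1_3 (x : ℝ) : f 1 3 x = f 1 2 x + f 2 3 x := by
  rw [fsplit 1 2 3 x (by norm_num) (by norm_num)]
  try ring

lemma fsplit_1_4 (x : ℝ) : f 1 4 x = f 1 2 x + f 2 3 x + f 3 4 x := by
  rw [fsplit 1 2 4 x (by norm_num) (by norm_num), fsplit 2 3 4 x (by norm_num) (by norm_num)]
  try ring

lemma fsplit_1_5 (x : ℝ) : f 1 5 x = f 1 2 x + f 2 3 x + f 3 4 x + f 4 5 x := by
  rw [fsplit 1 2 5 x (by norm_num) (by norm_num), fsplit 2 3 5 x (by norm_num) (by norm_num), fsplit 3 4 5 x (by norm_num) (by norm_num)]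
  try ring

lemma fsplit_2_4 (x : ℝ) : f 2 4 x = f 2 3 x + f 3 4 x := by
  rw [fsplit 2 3 4 x (by norm_num) (by norm_num)]
  try ring

lemma fsplit_2_6 (x : ℝ) : f 2 6 x = f 2 3 x + f 3 4 x + f 4 5 x + f 5 6 x := by
  rw [fsplit 2 3 6 x (by norm_num) (by norm_num), fsplit 3 4 6 x (by norm_num) (by norm_num), fsplit 4 5 6 x (by norm_num) (by norm_num)]
  try ring

lemma fsplit_3_5 (x : ℝ) : f 3 5 x = f 3 4 x + f 4 5 x := by
  rw [fsplit 3 4 5 x (by norm_num) (by norm_num)]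
  try ring

lemma fsplit_3_6 (x : ℝ) : f 3 6 x = f 3 4 x + f 4 5 x + f 5 6 x := by
  rw [fsplit 3 4 6 x (by norm_num) (by norm_num), fsplit 4 5 6 x (by norm_num) (by norm_num)]
  try ring

lemma fsplit_4_6 (x : ℝ) : f 4 6 x = f 4 5 x + f 5 6 x := by
  rw [fsplit 4 5 6 x (by norm_num) (by norm_num)]
  try ring


/-- The set `{T, T(2), T(3)}` of rescalings of the L-shaped tromino
`T = 𝟙_{[0,2)×[0,2)} − 𝟙_{[1,2)×[1,2)}` ℤ-tiles the 3×3 square `[1,4)×[1,4)`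
using integer translates. -/
theorem tromino_tiles_three_square (T : ℝ × ℝ → ℤ)
    (hT : ∀ p, T p = rectIndZ 0 2 0 2 p - rectIndZ 1 2 1 2 p) :
    ∃ (n : ℕ) (a : Fin n → ℤ) (ρ : Fin n → ℝ) (v : Fin n → ℤ × ℤ),
      (∀ i, ρ i = 1 ∨ ρ i = 2 ∨ ρ i = 3) ∧
      ∀ p : ℝ × ℝ, rectIndZ 1 4 1 4 p =
        ∑ i, a i * T ((p.1 - ((v i).1 : ℝ)) / ρ i, (p.2 - ((v i).2 : ℝ)) / ρ i) := by
  refine ⟨18, ![1, -1, -1, -1, -1, 1, 1, 1, 1, -1, 1, 1, 1, -1, 1, 1, 1, -1], ![3, 2, 2, 2, 1, 1, 1, 1, 1, 1, 1, 1, 1, 1, 1, 1, 1, 1], ![((0, 0) : ℤ × ℤ), ((0, 0) : ℤ × ℤ), ((1, 0) : ℤ × ℤ), ((2, 0) : ℤ × ℤ), ((0, 4) : ℤ × ℤ), ((1, 0) : ℤ × ℤ), ((1, 1) : ℤ × ℤ), ((1, 2) : ℤ × ℤ), ((1, 3) : ℤ × ℤ), ((1, 4) : ℤ × ℤ), ((2,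 0) : ℤ × ℤ), ((2, 1) : ℤ × ℤ), ((2, 3) : ℤ × ℤ), ((2, 4) : ℤ × ℤ), ((3, 0) : ℤ × ℤ), ((3, 1) : ℤ × ℤ), ((3, 3) : ℤ × ℤ), ((4, 2) : ℤ × ℤ)], ?_, ?_⟩
  · intro i
    fin_cases i <;> norm_num
  · rintro ⟨x, y⟩
    simp only [Fin.sum_univ_succ, Fin.sum_univ_zero, Matrix.cons_val_zero, Matrix.cons_val_succ,
      hT, rect_f]
    simp only [fs1, fs2, fs3]
    norm_num
    simp only [fsplit_0_2, fsplit_0_4, fsplit_0_6, fsplit_1_3, fsplit_1_4, fsplit_1_5, fsplit_2_4, fsplit_2_6, fsplit_3_5, fsplit_3_6, fsplit_4_6]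
    ring
end
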